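/- arXiv:1802.09648 — 5 statements merged into one kernel-verified Lean document; each statement's English description precedes it below -/
import Mathlib

section
/- Let n, d be integers with 1 ≤ d < n−1 and let Γ ⊂ ℝⁿ be a closed d-Ahlfors regular set with constant C₀. Then there exists a constant c ∈ (0,1), depending only on d, n, C₀, such that for every Λ ≥ 1, every s > 0, and every pair of points X₁, X₂ ∈ Ω = ℝⁿ ∖ Γ with δ(X₁) ≥ s, δ(X₂) ≥ s and |X₁ − X₂| ≤ Λ s, there exist points Y₁ ∈ B(X₁, s/2) and Y₂ ∈ B(X₂, s/2) such that the line segment [Y₁, Y₂] satisfies dist([Y₁, Y₂], Γ) ≥ c Λ^{−d/(n−1−d)} s. -/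
/-!
Put `ρ = c Λ^(-d/(n-1-d)) s`. By Ahlfors regularity, the part of `Γ` within `s/2` of `[X₁, X₂]` is
covered by `N ≲ Λ (s/ρ)^d` balls `B(q, ρ)` centred on `Γ` (a maximal `ρ`-separated set, counted by
comparing the measures of disjoint balls). Call `(Y₁, Y₂) ∈ B̄(X₁, s/4) × B̄(X₂, s/4)` bad for `q`
if `[Y₁, Y₂]` meets `B̄(q, 2ρ)`. Once the endpoint farther from `q` is fixed, the other endpoint of a
bad pair lies within `8ρ` of the ray through `q`, along a stretch of length `s`; so the bad pairs
for `q` have measure `≲ (s/ρ) ρⁿ sⁿ` (Fubini). Summing over `q` gives `≲ Λ (ρ/s)^(n-1-d) s^(2n)`,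
which for small `c` is less than the measure `≈ s^(2n)` of all pairs. A pair that is bad for no `q`
keeps its whole segment at distance `≥ ρ` from `Γ`.
-/

open MeasureTheory Metric Set
open scoped ENNReal NNReal Topology

noncomputable section

abbrev Pt (n : ℕ) := EuclideanSpace ℝ (Fin n)

/-- A closed set `Γ ⊆ ℝⁿ` is `d`-Ahlfors regular with constant `C₀`. -/
def AhlforsRegular (n d : ℕ) (C₀ : ℝ) (Γ : Set (Pt n)) : Prop :=
  ∀ q ∈ Γ, ∀ r : ℝ, 0 < r →
    ENNReal.ofReal (C₀⁻¹ * r ^ d) ≤ μH[(d : ℝ)] (ball q r ∩ Γ) ∧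
    μH[(d : ℝ)] (ball q r ∩ Γ) ≤ ENNReal.ofReal (C₀ * r ^ d)

namespace Metric

variable {X : Type*} [PseudoMetricSpace X] [MeasurableSpace X] [OpensMeasurableSpace X]
  {ν : Measure X}

theorem IsSeparated.card_mul_le_measure_iUnion_ball {ε : ℝ≥0} {T : Finset X}
    (hT : IsSeparated ε (T : Set X)) {m : ℝ≥0∞} (hm : ∀ x ∈ T, m ≤ ν (ball x (ε / 2))) :
    T.card * m ≤ ν (⋃ x ∈ T, ball x (ε / 2)) := by
  have hdisj : (T : Set X).PairwiseDisjoint fun x => ball x (ε / 2) := by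
    intro x hx y hy hxy
    have hε : (ε : ℝ) < dist x y := by
      have : (ε : ℝ≥0∞) < edist x y := hT hx hy hxy
      rwa [edist_dist, ← ENNReal.ofReal_coe_nnreal,
        ENNReal.ofReal_lt_ofReal_iff_of_nonneg ε.coe_nonneg] at this
    exact ball_disjoint_ball (by linarith)
  rw [measure_biUnion_finset hdisj fun _ _ => measurableSet_ball, ← nsmul_eq_mul]
  exact Finset.card_nsmul_le_sum _ _ _ hm

theorem packingNumber_ne_top_of_measure_ball {A : Set X} {ε : ℝ≥0} {m : ℝ≥0∞} (hm₀ : m ≠ 0)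
    (hm : ∀ x ∈ A, m ≤ ν (ball x (ε / 2))) (hA : ν (thickening (ε / 2) A) ≠ ⊤) :
    packingNumber ε A ≠ ⊤ := by
  obtain ⟨N, hN⟩ := ENNReal.exists_nat_mul_gt hm₀ hA
  refine ne_top_of_le_ne_top (ENat.natCast_ne_top N) (iSup₂_le fun C hCA => iSup_le fun hC => ?_)
  by_contra! hlt
  obtain ⟨t, htC, htcard⟩ := Set.exists_subset_encard_eq (Order.add_one_le_of_lt hlt)
  have htfin : t.Finite := Set.encard_ne_top_iff.mp (by simp [htcard])
  have hcard : htfin.toFinset.card = N + 1 := by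
    rw [← Nat.cast_inj (R := ℕ∞), ← Set.Finite.encard_eq_coe_toFinset_card htfin, htcard]; rfl
  have hsep : IsSeparated ε (htfin.toFinset : Set X) := by
    rw [Set.Finite.coe_toFinset]; exact hC.subset htC
  have hmem : ∀ x ∈ htfin.toFinset, x ∈ A := fun x hx => hCA (htC (htfin.mem_toFinset.mp hx))
  have hsub : (⋃ x ∈ htfin.toFinset, ball x (ε / 2)) ⊆ thickening (ε / 2) A :=
    iUnion₂_subset fun x hx => ball_subset_thickening (hmem x hx) _
  have hcontra : ν (thickening (ε / 2) A) < ν (thickening (ε / 2) A) :=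
    calc ν (thickening (ε / 2) A) < N * m := hN
      _ ≤ htfin.toFinset.card * m := by rw [hcard]; gcongr; omega
      _ ≤ ν (⋃ x ∈ htfin.toFinset, ball x (ε / 2)) :=
          hsep.card_mul_le_measure_iUnion_ball fun x hx => hm x (hmem x hx)
      _ ≤ ν (thickening (ε / 2) A) := measure_mono hsub
  exact lt_irrefl _ hcontra

theorem exists_finset_cover_card_mul_le_measure_thickening {A : Set X} {ε : ℝ} (hε : 0 ≤ ε)
    {m : ℝ≥0∞} (hm₀ : m ≠ 0) (hm : ∀ x ∈ A, m ≤ ν (ball x (ε / 2)))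
    (hA : ν (thickening (ε / 2) A) ≠ ⊤) :
    ∃ C : Finset X, ↑C ⊆ A ∧ A ⊆ ⋃ x ∈ C, closedBall x ε ∧
      C.card * m ≤ ν (thickening (ε / 2) A) := by
  lift ε to ℝ≥0 using hε
  have hpack := packingNumber_ne_top_of_measure_ball hm₀ hm hA
  have hfin : (maximalSeparatedSet ε A).Finite := by
    rw [← Set.encard_ne_top_iff, encard_maximalSeparatedSet hpack]; exact hpack
  have hsub : ↑hfin.toFinset ⊆ A := by
    rw [Set.Finite.coe_toFinset]; exact maximalSeparatedSet_subset
  refine ⟨hfin.toFinset, hsub, ?_, ?_⟩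
  · simpa only [Set.Finite.mem_toFinset] using
      isCover_iff_subset_iUnion_closedBall.mp (isCover_maximalSeparatedSet hpack)
  · refine (IsSeparated.card_mul_le_measure_iUnion_ball ?_ fun x hx => hm x (hsub hx)).trans
      (measure_mono (iUnion₂_subset fun x hx => ball_subset_thickening (hsub hx) _))
    rw [Set.Finite.coe_toFinset]; exact isSeparated_maximalSeparatedSet

end Metric

section Segment

variable {E : Type*} [NormedAddCommGroup E] [NormedSpace ℝ E]

theorem segment_subset_iUnion_closedBall (x y : E) {K : ℕ} {r : ℝ} (hr : 0 ≤ r)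
    (h : ‖y - x‖ ≤ K * r) :
    segment ℝ x y ⊆ ⋃ i ∈ Finset.range (K + 1), closedBall (x + ((i : ℝ) / K) • (y - x)) r := by
  rw [segment_eq_image']
  rintro _ ⟨θ, ⟨hθ₀, hθ₁⟩, rfl⟩
  have hθK : 0 ≤ θ * K := by positivity
  have hiK : ⌊θ * K⌋₊ ≤ K := Nat.floor_le_of_le (by nlinarith)
  have hgap : |θ - ⌊θ * K⌋₊ / K| * K ≤ 1 := by
    rcases Nat.eq_zero_or_pos K with rfl | hK
    · simp
    have hK' : (0 : ℝ) < K := Nat.cast_pos.mpr hK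
    rw [← abs_of_pos hK', ← abs_mul, abs_of_pos hK', sub_mul, div_mul_cancel₀ _ hK'.ne',
      abs_le]
    constructor <;> linarith [Nat.floor_le hθK, Nat.lt_floor_add_one (θ * K)]
  refine mem_biUnion (Finset.mem_range.mpr (Nat.lt_succ_of_le hiK)) (mem_closedBall.mpr ?_)
  calc dist (x + θ • (y - x)) (x + ((⌊θ * K⌋₊ : ℕ) / K : ℝ) • (y - x))
      = |θ - ⌊θ * K⌋₊ / K| * ‖y - x‖ := by
        rw [dist_add_left, dist_eq_norm, ← sub_smul, norm_smul, Real.norm_eq_abs]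
    _ ≤ |θ - ⌊θ * K⌋₊ / K| * (K * r) := by gcongr
    _ ≤ r := by rw [← mul_assoc]; exact mul_le_of_le_one_left hr hgap

-- `Z` is far from `p` and `Y` is not much farther, so `Z - p = a • (Y - p)` with `a ≥ 1/4`;
-- then `Y - (p + a⁻¹ • (q - p)) = a⁻¹ • (Z - q)`.
theorem exists_dist_ray_le_of_segment_meets_closedBall {s ρ : ℝ} (hs : 0 < s) (hρs : ρ ≤ s / 32)
    {p q Y Z : E} (hZ : Z ∈ segment ℝ Y p) (hZq : dist Z q ≤ 2 * ρ)
    (hpq : 3 * s / 4 ≤ dist p q) (hYq : dist Y q ≤ dist p q + s / 2) :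
    ∃ t : ℝ, 0 ≤ t ∧ t ≤ 4 ∧ dist Y (p + t • (q - p)) ≤ 8 * ρ := by
  obtain ⟨a, b, ha, hb, hab, rfl⟩ := hZ
  obtain rfl : b = 1 - a := by linarith
  have hZp : dist (a • Y + (1 - a) • p) p = a * dist Y p := by
    rw [dist_eq_norm, dist_eq_norm, show a • Y + (1 - a) • p - p = a • (Y - p) by module,
      norm_smul, Real.norm_of_nonneg ha]
  have hfar : 11 / 12 * dist p q ≤ a * dist Y p := by
    linarith [dist_triangle p (a • Y + (1 - a) • p) q, dist_comm p (a • Y + (1 - a) • p)]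
  have hnear : dist Y p ≤ 8 / 3 * dist p q := by
    linarith [dist_triangle Y q p, dist_comm p q]
  have ha' : 1 / 4 ≤ a := by nlinarith
  have ha4 : a⁻¹ ≤ 4 := inv_le_of_inv_le₀ (by norm_num) (by linarith)
  refine ⟨a⁻¹, by positivity, ha4, ?_⟩
  have hinv : a⁻¹ * a = 1 := inv_mul_cancel₀ (by linarith)
  have hYray : Y - (p + a⁻¹ • (q - p)) = a⁻¹ • (a • Y + (1 - a) • p - q) := by
    linear_combination (norm := module) hinv • (p - Y)
  rw [dist_eq_norm, hYray, norm_smul, ← dist_eq_norm, Real.norm_of_nonneg (by positivity)]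
  calc a⁻¹ * dist (a • Y + (1 - a) • p) q ≤ 4 * (2 * ρ) := by gcongr
    _ = 8 * ρ := by ring

-- `Y` lies within `8ρ` of the ray from `p` through `q`, at a distance from `p` that ranges over an
-- interval of length `s`; that piece of the ray is covered by `⌈s/ρ⌉ + 1` balls of radius `ρ`.
theorem exists_setOf_segment_meets_closedBall_subset {s ρ : ℝ} (hs : 0 < s) (hρ : 0 < ρ)
    (hρs : ρ ≤ s / 32) {x p q : E} (hpq : 3 * s / 4 ≤ dist p q)
    (hxq : dist x q ≤ dist p q + s / 4) :
    ∃ c : ℕ → E, {Y ∈ closedBall x (s / 4) | (segment ℝ Y p ∩ closedBall q (2 * ρ)).Nonempty} ⊆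
      ⋃ i ∈ Finset.range (⌈s / ρ⌉₊ + 1), closedBall (c i) (9 * ρ) := by
  set K := ⌈s / ρ⌉₊
  set D := dist p q
  have hD : 0 < D := by linarith
  set v : E := D⁻¹ • (q - p)
  have hv : ‖v‖ = 1 := by
    rw [norm_smul, ← dist_eq_norm', norm_inv, Real.norm_of_nonneg hD.le, inv_mul_cancel₀ hD.ne']
  have hdist_ray : ∀ τ τ' : ℝ, dist (p + τ • v) (p + τ' • v) = |τ - τ'| := fun τ τ' => by
    rw [dist_add_left, dist_eq_norm, ← sub_smul, norm_smul, hv, mul_one, Real.norm_eq_abs]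
  set α := dist x p - s / 2 with hα
  have hinterval := segment_subset_iUnion_closedBall α (α + s) (K := K) hρ.le <| by
    rw [add_sub_cancel_left, Real.norm_of_nonneg hs.le, ← div_le_iff₀ hρ]
    exact Nat.le_ceil _
  refine ⟨fun i => p + (α + ((i : ℝ) / K) • s) • v, ?_⟩
  rintro Y ⟨hYx, Z, hZ, hZq⟩
  rw [mem_closedBall] at hYx hZq
  obtain ⟨t, ht₀, -, hYt⟩ := exists_dist_ray_le_of_segment_meets_closedBall hs hρs hZ hZq hpq
    (by linarith [dist_triangle Y x q])
  have hray : p + t • (q - p) = p + (t * D) • v := by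
    rw [smul_smul, mul_assoc, mul_inv_cancel₀ hD.ne', mul_one]
  rw [hray] at hYt
  have hτ : |t * D - dist x p| ≤ s / 2 := by
    have hPp : dist (p + (t * D) • v) p = t * D := by
      rw [dist_eq_norm, add_sub_cancel_left, norm_smul, hv, mul_one,
        Real.norm_of_nonneg (by positivity)]
    rw [← hPp]
    linarith [abs_dist_sub_le (p + (t * D) • v) x p, dist_triangle_left (p + (t * D) • v) x Y]
  have hτ' : t * D ∈ segment ℝ α (α + s) := by
    rw [segment_eq_Icc (by linarith), hα]
    constructor <;> linarith [abs_le.mp hτ]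
  obtain ⟨i, hi, hτi⟩ := mem_iUnion₂.mp (hinterval hτ')
  rw [mem_closedBall, add_sub_cancel_left] at hτi
  refine mem_iUnion₂.mpr ⟨i, hi, mem_closedBall.mpr ?_⟩
  linarith [dist_triangle Y (p + (t * D) • v) (p + (α + ((i : ℝ) / K) • s) • v),
    hdist_ray (t * D) (α + ((i : ℝ) / K) • s), Real.dist_eq (t * D) (α + ((i : ℝ) / K) • s)]

theorem measure_setOf_segment_meets_closedBall_le [MeasurableSpace E] [BorelSpace E]
    (μ : Measure E) [μ.IsAddHaarMeasure] {s ρ : ℝ} (hs : 0 < s) (hρ : 0 < ρ)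
    (hρs : ρ ≤ s / 32) {x p q : E} (hpq : 3 * s / 4 ≤ dist p q)
    (hxq : dist x q ≤ dist p q + s / 4) :
    μ {Y ∈ closedBall x (s / 4) | (segment ℝ Y p ∩ closedBall q (2 * ρ)).Nonempty} ≤
      (⌈s / ρ⌉₊ + 1 : ℕ) * μ (closedBall 0 (9 * ρ)) := by
  obtain ⟨c, hc⟩ := exists_setOf_segment_meets_closedBall_subset hs hρ hρs hpq hxq
  refine (measure_mono hc).trans ((measure_biUnion_finset_le _ _).trans_eq ?_)
  simp only [Measure.addHaar_closedBall_center, Finset.sum_const, Finset.card_range, nsmul_eq_mul]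

end Segment

section SegmentMeets

variable {E : Type*} [NormedAddCommGroup E] [NormedSpace ℝ E]

def segmentMeets (K : Set E) : Set (E × E) := {y | (segment ℝ y.1 y.2 ∩ K).Nonempty}

theorem isClosed_segmentMeets {K : Set E} (hK : IsClosed K) : IsClosed (segmentMeets K) := by
  have hrepr : segmentMeets K = Prod.fst ''
      {w : (E × E) × Icc (0 : ℝ) 1 | w.1.1 + (w.2 : ℝ) • (w.1.2 - w.1.1) ∈ K} := by
    ext y
    simp only [segmentMeets, segment_eq_image', mem_ofPred_eq, mem_image, Prod.exists,
      Subtype.exists, exists_and_right, exists_eq_right]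
    constructor
    · rintro ⟨_, ⟨θ, hθ, rfl⟩, hK⟩
      exact ⟨θ, hθ, hK⟩
    · rintro ⟨θ, hθ, hK⟩
      exact ⟨_, ⟨θ, hθ, rfl⟩, hK⟩
  rw [hrepr]
  exact isClosedMap_fst_of_compactSpace _ (hK.preimage (by fun_prop))

theorem swap_preimage_prod_inter_segmentMeets (A B K : Set E) :
    Prod.swap ⁻¹' (B ×ˢ A ∩ segmentMeets K) = A ×ˢ B ∩ segmentMeets K := by
  ext ⟨a, b⟩
  simp only [segmentMeets, mem_preimage, mem_inter_iff, mem_prod, Prod.fst_swap, Prod.snd_swap,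
    mem_ofPred_eq, segment_symm ℝ b a, and_comm (a := b ∈ B)]

theorem measure_prod_le_mul_of_slice_le {α β : Type*} [MeasurableSpace α] [MeasurableSpace β]
    {μ : Measure α} {ν : Measure β} [SFinite μ] [SFinite ν] {S : Set (α × β)}
    (hS : MeasurableSet S) {B : Set β} (hB : MeasurableSet B) (hSB : ∀ z ∈ S, z.2 ∈ B)
    {m : ℝ≥0∞} (hm : ∀ y ∈ B, μ ((fun x => (x, y)) ⁻¹' S) ≤ m) : μ.prod ν S ≤ m * ν B := by
  rw [Measure.prod_apply_symm hS, ← lintegral_indicator_const hB]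
  refine lintegral_mono fun y => ?_
  by_cases hy : y ∈ B
  · rw [indicator_of_mem hy]; exact hm y hy
  · have hempty : (fun x => (x, y)) ⁻¹' S = ∅ :=
      eq_empty_of_forall_notMem fun x hx => hy (hSB _ hx)
    simp [hempty]

variable [FiniteDimensional ℝ E] [MeasurableSpace E] [BorelSpace E] (μ : Measure E)
  [μ.IsAddHaarMeasure]

theorem measurableSet_prod_inter_segmentMeets {A B K : Set E} (hA : IsClosed A) (hB : IsClosed B)
    (hK : IsClosed K) : MeasurableSet (A ×ˢ B ∩ segmentMeets K) :=
  ((hA.prod hB).inter (isClosed_segmentMeets hK)).measurableSet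

theorem measure_prod_inter_segmentMeets_le_of_dist_le {s ρ : ℝ} (hs : 0 < s) (hρ : 0 < ρ)
    (hρs : ρ ≤ s / 32) {X₁ X₂ q : E} (hq₂ : s ≤ dist q X₂) (hnear : dist q X₁ ≤ dist q X₂) :
    μ.prod μ (closedBall X₁ (s / 4) ×ˢ closedBall X₂ (s / 4) ∩ segmentMeets (closedBall q (2 * ρ)))
      ≤ (⌈s / ρ⌉₊ + 1 : ℕ) * μ (closedBall 0 (9 * ρ)) * μ (closedBall 0 (s / 4)) := by
  rw [← Measure.addHaar_closedBall_center μ X₂ (s / 4)]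
  refine measure_prod_le_mul_of_slice_le (μ := μ) (ν := μ)
    (measurableSet_prod_inter_segmentMeets isClosed_closedBall isClosed_closedBall
      isClosed_closedBall) measurableSet_closedBall (fun z hz => hz.1.2) fun y hy => ?_
  rw [mem_closedBall] at hy
  refine (measure_mono (t := {x ∈ closedBall X₁ (s / 4) |
    (segment ℝ x y ∩ closedBall q (2 * ρ)).Nonempty}) fun x hx => ⟨hx.1.1, hx.2⟩).trans
    (measure_setOf_segment_meets_closedBall_le μ hs hρ hρs ?_ ?_)
  · linarith [dist_triangle q y X₂, dist_comm q y]
  · linarith [dist_triangle X₂ y q, dist_comm X₁ q, dist_comm q X₂, dist_comm X₂ y]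

theorem measure_prod_inter_segmentMeets_le {s ρ : ℝ} (hs : 0 < s) (hρ : 0 < ρ)
    (hρs : ρ ≤ s / 32) {X₁ X₂ q : E} (hq₁ : s ≤ dist q X₁) (hq₂ : s ≤ dist q X₂) :
    μ.prod μ (closedBall X₁ (s / 4) ×ˢ closedBall X₂ (s / 4) ∩ segmentMeets (closedBall q (2 * ρ)))
      ≤ (⌈s / ρ⌉₊ + 1 : ℕ) * μ (closedBall 0 (9 * ρ)) * μ (closedBall 0 (s / 4)) := by
  rcases le_total (dist q X₁) (dist q X₂) with hnear | hnear
  · exact measure_prod_inter_segmentMeets_le_of_dist_le μ hs hρ hρs hq₂ hnear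
  · rw [← swap_preimage_prod_inter_segmentMeets,
      Measure.measurePreserving_swap.measure_preimage (measurableSet_prod_inter_segmentMeets
        isClosed_closedBall isClosed_closedBall isClosed_closedBall).nullMeasurableSet]
    exact measure_prod_inter_segmentMeets_le_of_dist_le μ hs hρ hρs hq₁ hnear

theorem measure_biUnion_prod_inter_segmentMeets_lt {s ρ : ℝ} (hs : 0 < s) (hρ : 0 < ρ)
    (hρs : ρ ≤ s / 32) (X₁ X₂ : E) (Q : Finset E) (hQ : ∀ q ∈ Q, s ≤ dist q X₁ ∧ s ≤ dist q X₂)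
    (hcount : (Q.card : ℝ) * (3 * s / ρ) * (36 * ρ / s) ^ Module.finrank ℝ E < 1) :
    μ.prod μ (⋃ q ∈ Q, closedBall X₁ (s / 4) ×ˢ closedBall X₂ (s / 4) ∩
      segmentMeets (closedBall q (2 * ρ))) <
      μ.prod μ (closedBall X₁ (s / 4) ×ˢ closedBall X₂ (s / 4)) := by
  set B := μ (closedBall 0 (s / 4))
  have hB₀ : B ≠ 0 := (measure_closedBall_pos μ 0 (by positivity)).ne'
  have hB : B ≠ ⊤ := measure_closedBall_lt_top.ne
  have hsmall : μ (closedBall 0 (9 * ρ)) =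
      ENNReal.ofReal ((36 * ρ / s) ^ Module.finrank ℝ E) * B := by
    rw [← Measure.addHaar_closedBall_mul μ 0 (by positivity) (by positivity),
      div_mul_div_comm, mul_comm s 4, ← div_mul_div_comm, div_self hs.ne', mul_one]
    congr 2; ring
  have hceil : ((⌈s / ρ⌉₊ + 1 : ℕ) : ℝ≥0∞) ≤ ENNReal.ofReal (3 * s / ρ) := by
    rw [← ENNReal.ofReal_natCast]
    refine ENNReal.ofReal_le_ofReal ?_
    have h₁ : 1 ≤ s / ρ := by rw [le_div_iff₀ hρ]; linarith
    push_cast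
    linarith [Nat.ceil_lt_add_one (by positivity : 0 ≤ s / ρ), mul_div_assoc 3 s ρ]
  calc μ.prod μ (⋃ q ∈ Q, closedBall X₁ (s / 4) ×ˢ closedBall X₂ (s / 4) ∩
        segmentMeets (closedBall q (2 * ρ)))
      ≤ ∑ q ∈ Q, ENNReal.ofReal (3 * s / ρ) *
          (ENNReal.ofReal ((36 * ρ / s) ^ Module.finrank ℝ E) * B) * B := by
        refine (measure_biUnion_finset_le _ _).trans (Finset.sum_le_sum fun q hq => ?_)
        refine (measure_prod_inter_segmentMeets_le μ hs hρ hρs (hQ q hq).1 (hQ q hq).2).trans ?_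
        rw [hsmall]; gcongr
    _ = ENNReal.ofReal ((Q.card : ℝ) * (3 * s / ρ) * (36 * ρ / s) ^ Module.finrank ℝ E) *
          (B * B) := by
        rw [Finset.sum_const, nsmul_eq_mul, ENNReal.ofReal_mul (by positivity),
          ENNReal.ofReal_mul (by positivity), ENNReal.ofReal_natCast]
        ring
    _ < 1 * (B * B) := ENNReal.mul_lt_mul_left (mul_ne_zero hB₀ hB₀)
        (ENNReal.mul_ne_top hB hB) (ENNReal.ofReal_lt_one.mpr hcount)
    _ = μ.prod μ (closedBall X₁ (s / 4) ×ˢ closedBall X₂ (s / 4)) := by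
        rw [one_mul, Measure.prod_prod, Measure.addHaar_closedBall_center μ X₁,
          Measure.addHaar_closedBall_center μ X₂]

end SegmentMeets

section GoodPair

variable {E : Type*} [NormedAddCommGroup E] [NormedSpace ℝ E]

theorem exists_segment_disjoint_closedBall [FiniteDimensional ℝ E] {s ρ : ℝ} (hs : 0 < s)
    (hρ : 0 < ρ) (hρs : ρ ≤ s / 32) (X₁ X₂ : E) (Q : Finset E)
    (hQ : ∀ q ∈ Q, s ≤ dist q X₁ ∧ s ≤ dist q X₂)
    (hcount : (Q.card : ℝ) * (3 * s / ρ) * (36 * ρ / s) ^ Module.finrank ℝ E < 1) :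
    ∃ Y₁ ∈ closedBall X₁ (s / 4), ∃ Y₂ ∈ closedBall X₂ (s / 4),
      ∀ q ∈ Q, Disjoint (segment ℝ Y₁ Y₂) (closedBall q (2 * ρ)) := by
  borelize E
  have hlt := measure_biUnion_prod_inter_segmentMeets_lt Measure.addHaar hs hρ hρs X₁ X₂ Q hQ hcount
  obtain ⟨⟨Y₁, Y₂⟩, ⟨hY₁, hY₂⟩, hgood⟩ :=
    sdiff_nonempty.mpr fun hsub => (measure_mono hsub).not_gt hlt
  refine ⟨Y₁, hY₁, Y₂, hY₂, fun q hq => ?_⟩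
  rw [Set.disjoint_iff_inter_eq_empty, ← not_nonempty_iff_eq_empty]
  exact fun hmeet => hgood (mem_biUnion hq ⟨⟨hY₁, hY₂⟩, hmeet⟩)

theorem le_infDist_of_segment_disjoint_closedBall {Γ : Set E} (hΓ : Γ.Nonempty) {s ρ : ℝ}
    (hρs : ρ ≤ s / 4) {X₁ X₂ Y₁ Y₂ : E} (hY₁ : Y₁ ∈ closedBall X₁ (s / 4))
    (hY₂ : Y₂ ∈ closedBall X₂ (s / 4)) {Q : Set E}
    (hQ : Γ ∩ thickening (s / 2) (segment ℝ X₁ X₂) ⊆ ⋃ q ∈ Q, closedBall q ρ)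
    (hdisj : ∀ q ∈ Q, Disjoint (segment ℝ Y₁ Y₂) (closedBall q (2 * ρ))) {Y : E}
    (hY : Y ∈ segment ℝ Y₁ Y₂) : ρ ≤ infDist Y Γ := by
  by_contra! hlt
  obtain ⟨z, hzΓ, hzY⟩ := (infDist_lt_iff hΓ).mp hlt
  obtain ⟨a, b, ha, hb, hab, rfl⟩ := hY
  rw [mem_closedBall] at hY₁ hY₂
  have hYX : dist (a • Y₁ + b • Y₂) (a • X₁ + b • X₂) ≤ s / 4 :=
    calc dist (a • Y₁ + b • Y₂) (a • X₁ + b • X₂)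
        ≤ dist (a • Y₁) (a • X₁) + dist (b • Y₂) (b • X₂) := dist_add_add_le _ _ _ _
      _ = a * dist Y₁ X₁ + b * dist Y₂ X₂ := by
          rw [dist_smul₀, dist_smul₀, Real.norm_of_nonneg ha, Real.norm_of_nonneg hb]
      _ ≤ a * (s / 4) + b * (s / 4) := by gcongr
      _ = s / 4 := by rw [← add_mul, hab, one_mul]
  have hz : z ∈ Γ ∩ thickening (s / 2) (segment ℝ X₁ X₂) :=
    ⟨hzΓ, mem_thickening_iff.mpr ⟨_, ⟨a, b, ha, hb, hab, rfl⟩, by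
      linarith [dist_triangle z (a • Y₁ + b • Y₂) (a • X₁ + b • X₂),
        dist_comm z (a • Y₁ + b • Y₂)]⟩⟩
  obtain ⟨q, hq, hzq⟩ := mem_iUnion₂.mp (hQ hz)
  refine (hdisj q hq).ne_of_mem ⟨a, b, ha, hb, hab, rfl⟩ (mem_closedBall.mpr ?_) rfl
  linarith [dist_triangle (a • Y₁ + b • Y₂) z q, mem_closedBall.mp hzq]

end GoodPair

namespace AhlforsRegular

variable {n d : ℕ} {C₀ : ℝ} {Γ : Set (Pt n)}

theorem measure_ball_inter_le (hΓ : AhlforsRegular n d C₀ Γ) (x : Pt n) {r : ℝ} (hr : 0 < r) :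
    μH[(d : ℝ)] (ball x r ∩ Γ) ≤ ENNReal.ofReal (C₀ * (2 * r) ^ d) := by
  rcases (ball x r ∩ Γ).eq_empty_or_nonempty with hempty | ⟨q, hqx, hqΓ⟩
  · simp [hempty]
  have hsub : ball x r ∩ Γ ⊆ ball q (2 * r) ∩ Γ := by
    refine inter_subset_inter_left _ fun y hy => ?_
    rw [mem_ball] at hy hqx ⊢
    linarith [dist_triangle_right y q x]
  exact (measure_mono hsub).trans (hΓ q hqΓ _ (by positivity)).2

theorem exists_finset_cover (hΓ : AhlforsRegular n d C₀ Γ) (hC₀ : 0 < C₀) {A : Set (Pt n)}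
    (hAΓ : A ⊆ Γ) {ρ R : ℝ} (hρ : 0 < ρ) (hR : 0 < R) {ι : Type*} (I : Finset ι)
    (z : ι → Pt n) (hcov : thickening (ρ / 2) A ⊆ ⋃ i ∈ I, ball (z i) R) :
    ∃ C : Finset (Pt n), ↑C ⊆ A ∧ A ⊆ ⋃ x ∈ C, closedBall x ρ ∧
      (C.card : ℝ) ≤ I.card * C₀ ^ 2 * (4 * R / ρ) ^ d := by
  set ν := (μH[(d : ℝ)]).restrict Γ
  have hball : ∀ x r, ν (ball x r) = μH[(d : ℝ)] (ball x r ∩ Γ) := fun x r =>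
    Measure.restrict_apply measurableSet_ball
  have hthick : ν (thickening (ρ / 2) A) ≤ I.card * ENNReal.ofReal (C₀ * (2 * R) ^ d) :=
    calc ν (thickening (ρ / 2) A) ≤ ∑ i ∈ I, ν (ball (z i) R) :=
          (measure_mono hcov).trans (measure_biUnion_finset_le _ _)
      _ ≤ ∑ _i ∈ I, ENNReal.ofReal (C₀ * (2 * R) ^ d) :=
          Finset.sum_le_sum fun i _ => (hball _ _).trans_le (hΓ.measure_ball_inter_le _ hR)
      _ = _ := by rw [Finset.sum_const, nsmul_eq_mul]
  obtain ⟨C, hCA, hAC, hcard⟩ := Metric.exists_finset_cover_card_mul_le_measure_thickening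
    (ν := ν) hρ.le (m := ENNReal.ofReal (C₀⁻¹ * (ρ / 2) ^ d)) (by simp; positivity)
    (fun x hx => (hΓ x (hAΓ hx) _ (by positivity)).1.trans_eq (hball _ _).symm)
    (ne_top_of_le_ne_top (by simp [ENNReal.mul_eq_top]) hthick)
  refine ⟨C, hCA, hAC, ?_⟩
  have hreal : (C.card : ℝ) * (C₀⁻¹ * (ρ / 2) ^ d) ≤ I.card * (C₀ * (2 * R) ^ d) := by
    rw [← ENNReal.ofReal_le_ofReal_iff (by positivity), ENNReal.ofReal_mul (Nat.cast_nonneg _),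
      ENNReal.ofReal_mul (Nat.cast_nonneg _), ENNReal.ofReal_natCast, ENNReal.ofReal_natCast]
    exact hcard.trans hthick
  have hscale : (4 * R / ρ) ^ d * (ρ / 2) ^ d = (2 * R) ^ d := by
    rw [← mul_pow]; congr 1; field_simp; ring
  rw [← mul_le_mul_iff_left₀ (by positivity : 0 < C₀⁻¹ * (ρ / 2) ^ d)]
  calc (C.card : ℝ) * (C₀⁻¹ * (ρ / 2) ^ d) ≤ I.card * (C₀ * (2 * R) ^ d) := hreal
    _ = I.card * C₀ ^ 2 * (4 * R / ρ) ^ d * (C₀⁻¹ * (ρ / 2) ^ d) := by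
      rw [← hscale]; field_simp

theorem exists_finset_cover_near_segment (hΓ : AhlforsRegular n d C₀ Γ) (hC₀ : 0 < C₀)
    (X₁ X₂ : Pt n) {Λ s ρ : ℝ} (hΛ : 1 ≤ Λ) (hρ : 0 < ρ) (hρs : ρ ≤ s)
    (hX : dist X₁ X₂ ≤ Λ * s) :
    ∃ Q : Finset (Pt n), ↑Q ⊆ Γ ∧
      Γ ∩ thickening (s / 2) (segment ℝ X₁ X₂) ⊆ ⋃ q ∈ Q, closedBall q ρ ∧
      (Q.card : ℝ) ≤ 3 * Λ * C₀ ^ 2 * (8 * s / ρ) ^ d := by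
  have hs : 0 < s := hρ.trans_le hρs
  set K := ⌈Λ⌉₊
  have hsegment := segment_subset_iUnion_closedBall X₁ X₂ (K := K) hs.le <| by
    rw [← dist_eq_norm']
    exact hX.trans (mul_le_mul_of_nonneg_right (Nat.le_ceil Λ) (by linarith))
  have hcov : thickening (ρ / 2) (Γ ∩ thickening (s / 2) (segment ℝ X₁ X₂)) ⊆
      ⋃ i ∈ Finset.range (K + 1), ball (X₁ + ((i : ℝ) / K) • (X₂ - X₁)) (2 * s) := by
    intro y hy
    obtain ⟨w, hw, hyw⟩ := mem_thickening_iff.mp <| thickening_thickening_subset _ _ _ <|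
      thickening_subset_of_subset _ inter_subset_right hy
    obtain ⟨i, hi, hwi⟩ := mem_iUnion₂.mp (hsegment hw)
    exact mem_iUnion₂.mpr ⟨i, hi, mem_ball.mpr <| by
      linarith [dist_triangle y w (X₁ + ((i : ℝ) / K) • (X₂ - X₁)), mem_closedBall.mp hwi]⟩
  obtain ⟨Q, hQA, hQcov, hQcard⟩ :=
    hΓ.exists_finset_cover hC₀ inter_subset_left hρ (by positivity) _ _ hcov
  refine ⟨Q, hQA.trans inter_subset_left, hQcov, hQcard.trans ?_⟩
  have hK : (K : ℝ) + 1 ≤ 3 * Λ := by linarith [Nat.ceil_lt_add_one (by linarith : 0 ≤ Λ)]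
  rw [Finset.card_range, Nat.cast_add_one, show 4 * (2 * s) = 8 * s by ring]
  gcongr

end AhlforsRegular

-- Half the reciprocal of the constant `9 C₀² 8^d 36^n` in the count of `harnack_count_lt_one`.
def harnackConstant (n d : ℕ) (C₀ : ℝ) : ℝ := (18 * C₀ ^ 2 * 8 ^ d * 36 ^ n)⁻¹

theorem harnackConstant_pos {n d : ℕ} {C₀ : ℝ} (hC₀ : C₀ ≠ 0) : 0 < harnackConstant n d C₀ := by
  unfold harnackConstant; positivity

theorem harnackConstant_le {n d : ℕ} {C₀ : ℝ} (hC₀ : 1 ≤ C₀) (hn : n ≠ 0) :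
    harnackConstant n d C₀ ≤ 1 / 32 := by
  unfold harnackConstant
  rw [inv_eq_one_div]
  refine one_div_le_one_div_of_le (by norm_num) ?_
  have h36 : (36 : ℝ) ≤ 36 ^ n := le_self_pow₀ (by norm_num) hn
  have h8 : (1 : ℝ) ≤ 8 ^ d := one_le_pow₀ (by norm_num)
  have hC : (1 : ℝ) ≤ C₀ ^ 2 := one_le_pow₀ hC₀
  nlinarith [mul_le_mul hC h8 zero_le_one (by positivity)]

theorem harnackConstant_mul_rpow_le {n d : ℕ} {C₀ Λ : ℝ} (hC₀ : 1 ≤ C₀) (hdn : d + 1 < n)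
    (hΛ : 1 ≤ Λ) : harnackConstant n d C₀ * Λ ^ (-(d : ℝ) / ((n : ℝ) - 1 - d)) ≤ 1 / 32 := by
  have hexp : -(d : ℝ) / ((n : ℝ) - 1 - d) ≤ 0 := by
    have : (d : ℝ) + 1 < n := by exact_mod_cast hdn
    exact div_nonpos_of_nonpos_of_nonneg (neg_nonpos.mpr d.cast_nonneg) (by linarith)
  simpa using mul_le_mul (harnackConstant_le hC₀ (by omega))
    (Real.rpow_le_one_of_one_le_of_nonpos hΛ hexp) (Real.rpow_nonneg (by linarith) _) (by norm_num)

theorem rpow_neg_div_pow_mul_le_one {Λ : ℝ} (hΛ : 1 ≤ Λ) {d β : ℕ} (hd : d ≠ 0) (hβ : β ≠ 0) :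
    (Λ ^ (-(d : ℝ) / β)) ^ β * Λ ≤ 1 := by
  have hΛ₀ : 0 ≤ Λ := by linarith
  rw [← Real.rpow_natCast, ← Real.rpow_mul hΛ₀, div_mul_cancel₀ _ (by exact_mod_cast hβ),
    Real.rpow_neg hΛ₀, Real.rpow_natCast, inv_mul_le_one₀ (by positivity)]
  exact le_self_pow₀ hΛ hd

theorem harnack_count_lt_one {n d : ℕ} {C₀ Λ s ρ : ℝ} (hd : 1 ≤ d) (hdn : d + 1 < n)
    (hC₀ : 1 ≤ C₀) (hΛ : 1 ≤ Λ) (hs : 0 < s)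
    (hρ : ρ = harnackConstant n d C₀ * Λ ^ (-(d : ℝ) / ((n : ℝ) - 1 - d)) * s) :
    3 * Λ * C₀ ^ 2 * (8 * s / ρ) ^ d * (3 * s / ρ) * (36 * ρ / s) ^ n < 1 := by
  obtain ⟨β, rfl⟩ : ∃ β, n = d + 1 + β := ⟨n - (d + 1), by omega⟩
  have hβ : β ≠ 0 := by omega
  rw [show ((d + 1 + β : ℕ) : ℝ) - 1 - d = β by push_cast; ring] at hρ
  set c := harnackConstant (d + 1 + β) d C₀
  set L := Λ ^ (-(d : ℝ) / β)
  have hc : 0 < c := harnackConstant_pos (by positivity)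
  have hc₁ : c ≤ 1 := (harnackConstant_le hC₀ (by omega)).trans (by norm_num)
  have hL : 0 < L := Real.rpow_pos_of_pos (by linarith) _
  have hscale : (8 * s / ρ) ^ d * (3 * s / ρ) * (36 * ρ / s) ^ (d + 1 + β) =
      3 * 8 ^ d * 36 ^ (d + 1 + β) * c ^ β * L ^ β := by
    rw [hρ, div_pow, div_pow]; field_simp; ring
  calc 3 * Λ * C₀ ^ 2 * (8 * s / ρ) ^ d * (3 * s / ρ) * (36 * ρ / s) ^ (d + 1 + β)
      = 9 * C₀ ^ 2 * 8 ^ d * 36 ^ (d + 1 + β) * c ^ β * (L ^ β * Λ) := by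
        rw [mul_assoc _ ((8 * s / ρ) ^ d), mul_assoc _ (_ * _), hscale]; ring
    _ ≤ 9 * C₀ ^ 2 * 8 ^ d * 36 ^ (d + 1 + β) * c * 1 := by
        gcongr
        · exact pow_le_of_le_one hc.le hc₁ hβ
        · exact rpow_neg_div_pow_mul_le_one hΛ (by omega) hβ
    _ = 1 / 2 := by simp only [c, harnackConstant]; field_simp; ring
    _ < 1 := by norm_num

/-- Harnack chain condition (Lemma 2.1 of David–Feneuil–Mayboroda): there is a constant
`c ∈ (0,1)`, depending only on `d`, `n`, `C₀`, such that for every `Λ ≥ 1`, `s > 0` and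
points `X₁, X₂` of `Ω = ℝⁿ \ Γ` with `δ(Xᵢ) ≥ s` and `|X₁ - X₂| ≤ Λ s`, there are points
`Yᵢ ∈ B(Xᵢ, s/2)` whose joining segment stays at distance at least `c Λ^{-d/(n-1-d)} s`
from `Γ`. -/
theorem harnack_chain_condition (n d : ℕ) (C₀ : ℝ)
    (hd : 1 ≤ d) (hdn : d + 1 < n) (hC₀ : 1 ≤ C₀) :
    ∃ c : ℝ, c ∈ Set.Ioo (0 : ℝ) 1 ∧
      ∀ Γ : Set (Pt n), IsClosed Γ → Γ.Nonempty → AhlforsRegular n d C₀ Γ →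
        ∀ Λ s : ℝ, 1 ≤ Λ → 0 < s →
          ∀ X₁ X₂ : Pt n, X₁ ∉ Γ → X₂ ∉ Γ →
            s ≤ infDist X₁ Γ → s ≤ infDist X₂ Γ → dist X₁ X₂ ≤ Λ * s →
            ∃ Y₁ ∈ ball X₁ (s / 2), ∃ Y₂ ∈ ball X₂ (s / 2),
              ∀ Y ∈ segment ℝ Y₁ Y₂,
                c * Λ ^ (-(d : ℝ) / ((n : ℝ) - 1 - (d : ℝ))) * s ≤ infDist Y Γ := by
  have hc := harnackConstant_pos (n := n) (d := d) (by positivity : C₀ ≠ 0)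
  refine ⟨harnackConstant n d C₀, ⟨hc, (harnackConstant_le hC₀ (by omega)).trans_lt (by norm_num)⟩,
    fun Γ _ hΓne hΓ Λ s hΛ hs X₁ X₂ _ _ hX₁ hX₂ hX => ?_⟩
  set ρ := harnackConstant n d C₀ * Λ ^ (-(d : ℝ) / ((n : ℝ) - 1 - d)) * s with hρ
  have hρ₀ : 0 < ρ := mul_pos (mul_pos hc (Real.rpow_pos_of_pos (by linarith) _)) hs
  have hρs : ρ ≤ s / 32 := by
    nlinarith [mul_le_mul_of_nonneg_right (harnackConstant_mul_rpow_le hC₀ hdn hΛ) hs.le]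
  obtain ⟨Q, hQΓ, hQcov, hQcard⟩ :=
    hΓ.exists_finset_cover_near_segment (by positivity) X₁ X₂ hΛ hρ₀ (by linarith) hX
  have hQfar : ∀ q ∈ Q, s ≤ dist q X₁ ∧ s ≤ dist q X₂ := fun q hq =>
    ⟨dist_comm X₁ q ▸ hX₁.trans (infDist_le_dist_of_mem (hQΓ hq)),
      dist_comm X₂ q ▸ hX₂.trans (infDist_le_dist_of_mem (hQΓ hq))⟩
  obtain ⟨Y₁, hY₁, Y₂, hY₂, hdisj⟩ :=
    exists_segment_disjoint_closedBall hs hρ₀ hρs X₁ X₂ Q hQfar <| by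
      rw [finrank_euclideanSpace_fin]
      exact lt_of_le_of_lt (by gcongr) (harnack_count_lt_one hd hdn hC₀ hΛ hs hρ)
  exact ⟨Y₁, closedBall_subset_ball (by linarith) hY₁, Y₂, closedBall_subset_ball (by linarith) hY₂,
    fun Y hY => le_infDist_of_segment_disjoint_closedBall hΓne (by linarith) hY₁ hY₂ hQcov hdisj hY⟩
end
end

section
/- Let n, d be integers with 1 ≤ d < n−1 and Γ ⊂ ℝⁿ a closed d-Ahlfors regular set with constant C₀, and let c ∈ (0,1) be the constant from the Harnack chain lemma. There is a constant C, depending only on d, n, C₀, with the following property. For every Λ ≥ 1, s > 0, and X₁, X₂ ∈ Ω with δ(X₁) ≥ s, δ(X₂) ≥ s and |X₁ − X₂| ≤ Λ s, setting τ = c Λ^{−d/(n−1−d)} s, there exist an integer N ≤ C Λ^{(n−1)/(n−1−d)}, points Z₁, …, Z_N ∈ ℝⁿ, and balls B₀ = B(X₁, s/2), B_j = B(Z_j, τ/4) for 1 ≤ j ≤ N, B_{N+1} = B(X₂, s/2), such that B_j ∩ B_{j+1} ≠ ∅ for all 0 ≤ j ≤ N, and for 1 ≤ j ≤ N one has dist(B_j,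 Γ) ≥ (3/4) τ and dist(B_j, Γ) < min{δ(X₁), δ(X₂)} + 3 Λ s. -/
open MeasureTheory Metric Set
open scoped ENNReal NNReal Topology

noncomputable section

/-- The conclusion of the Harnack chain lemma for the constant `c`. -/
def HarnackChainProp (n d : ℕ) (Γ : Set (Pt n)) (c : ℝ) : Prop :=
  ∀ Λ s : ℝ, 1 ≤ Λ → 0 < s →
    ∀ X₁ X₂ : Pt n, X₁ ∉ Γ → X₂ ∉ Γ →
      s ≤ infDist X₁ Γ → s ≤ infDist X₂ Γ → dist X₁ X₂ ≤ Λ * s →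
      ∃ Y₁ ∈ ball X₁ (s / 2), ∃ Y₂ ∈ ball X₂ (s / 2),
        ∀ Y ∈ segment ℝ Y₁ Y₂,
          c * Λ ^ (-(d : ℝ) / ((n : ℝ) - 1 - (d : ℝ))) * s ≤ infDist Y Γ

/-! The Harnack chain lemma provides `Y₁ ∈ B(X₁, s/2)` and `Y₂ ∈ B(X₂, s/2)` such that the
segment `[Y₁, Y₂]` stays at distance `≥ τ` from `Γ`. Cutting it into `K ≈ 4|Y₁ - Y₂|/τ` equal
pieces gives centres `Z_j` with consecutive distances `< τ/4`, so consecutive balls of radius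
`τ/4` meet (at the midpoints) and lie at distance `≥ 3τ/4` from `Γ`, while their centres are
within `|Y₁ - Y₂| + s/2` of both `Xᵢ`. Since `|Y₁ - Y₂| < 2Λs` and
`Λs/τ = Λ^{(n-1)/(n-1-d)}/c`, the number of balls is at most `(8/c + 2) Λ^{(n-1)/(n-1-d)}`. -/

open AffineMap

section SegmentChain

variable {E : Type*} [NormedAddCommGroup E] [NormedSpace ℝ E]

theorem ball_inter_ball_nonempty_of_dist_lt {x y : E} {r : ℝ} (h : dist x y < 2 * r) :
    (ball x r ∩ ball y r).Nonempty := by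
  refine ⟨midpoint ℝ x y, ?_, ?_⟩ <;>
    simp only [mem_ball, dist_midpoint_left, dist_midpoint_right, Real.norm_two] <;> linarith

-- Indexed from `1`, like the balls `B_j`: the points `j = 1, …, K + 1` run from `x` to `y`.
def segmentChain (x y : E) (K j : ℕ) : E :=
  lineMap x y (((j : ℝ) - 1) / K)

@[simp]
theorem segmentChain_one (x y : E) (K : ℕ) : segmentChain x y K 1 = x := by
  simp [segmentChain]

theorem segmentChain_succ_self (x y : E) {K : ℕ} (hK : K ≠ 0) :
    segmentChain x y K (K + 1) = y := by
  simp [segmentChain, hK]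

theorem segmentChain_mem_segment (x y : E) {K j : ℕ} (hj₁ : 1 ≤ j) (hjK : j ≤ K + 1) :
    segmentChain x y K j ∈ segment ℝ x y := by
  refine lineMap_mem_segment ℝ x y
    ⟨div_nonneg ?_ K.cast_nonneg, div_le_one_of_le₀ ?_ K.cast_nonneg⟩
  · have : (1 : ℝ) ≤ j := by exact_mod_cast hj₁
    linarith
  · have : (j : ℝ) ≤ K + 1 := by exact_mod_cast hjK
    linarith

theorem dist_segmentChain_succ (x y : E) (K j : ℕ) :
    dist (segmentChain x y K j) (segmentChain x y K (j + 1)) = dist x y / K := by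
  rw [segmentChain, segmentChain, dist_lineMap_lineMap, Real.dist_eq]
  push_cast
  rw [← sub_div, show (j : ℝ) - 1 - (j + 1 - 1) = -1 by ring, abs_div, abs_neg, abs_one,
    Nat.abs_cast, one_div_mul_eq_div]

theorem exists_segmentChain_dist_succ_lt (x y : E) {r : ℝ} (hr : 0 < r) :
    ∃ K : ℕ, K ≠ 0 ∧ (K : ℝ) ≤ dist x y / r + 1 ∧
      ∀ j, dist (segmentChain x y K j) (segmentChain x y K (j + 1)) < r := by
  have ha : 0 ≤ dist x y / r := div_nonneg dist_nonneg hr.le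
  refine ⟨⌊dist x y / r⌋₊ + 1, Nat.succ_ne_zero _, ?_, fun j => ?_⟩
  · push_cast
    linarith [Nat.floor_le ha]
  · rw [dist_segmentChain_succ, div_lt_iff₀ (by positivity), ← div_lt_iff₀' hr]
    exact_mod_cast Nat.lt_floor_add_one _

theorem chain_inter_nonempty {X₁ X₂ : E} {r ρ : ℝ} {K : ℕ} (Z : ℕ → E) (hρ : 0 < ρ)
    (hZ₁ : Z 1 ∈ ball X₁ r) (hZK : Z (K + 1) ∈ ball X₂ r)
    (hstep : ∀ j, dist (Z j) (Z (j + 1)) < 2 * ρ) :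
    let B : ℕ → Set E := fun j =>
      if j = 0 then ball X₁ r else if j = K + 1 + 1 then ball X₂ r else ball (Z j) ρ
    ∀ j ≤ K + 1, (B j ∩ B (j + 1)).Nonempty := by
  intro B j hj
  rcases Nat.eq_zero_or_pos j with rfl | hj₀
  · have hB₁ : B 1 = ball (Z 1) ρ := by simp [B]
    rw [hB₁]
    exact ⟨Z 1, by simpa [B] using hZ₁, mem_ball_self hρ⟩
  rcases hj.eq_or_lt with rfl | hjK
  · have hBK : B (K + 1) = ball (Z (K + 1)) ρ := by simp [B]
    have hBK' : B (K + 1 + 1) = ball X₂ r := by simp [B]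
    rw [hBK, hBK']
    exact ⟨Z (K + 1), mem_ball_self hρ, hZK⟩
  · have hBj : B j = ball (Z j) ρ := by simp only [B]; rw [if_neg (by omega), if_neg (by omega)]
    have hBj' : B (j + 1) = ball (Z (j + 1)) ρ := by
      simp only [B]; rw [if_neg (by omega), if_neg (by omega)]
    rw [hBj, hBj']
    exact ball_inter_ball_nonempty_of_dist_lt (hstep j)

theorem infDist_lt_add_of_mem_segment {Γ : Set E} {X Y₁ Y₂ Z : E} {r : ℝ}
    (hZ : Z ∈ segment ℝ Y₁ Y₂) (hY₁ : Y₁ ∈ ball X r) :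
    infDist Z Γ < infDist X Γ + (dist Y₁ Y₂ + r) := by
  have hZY₁ : dist Y₁ Z ≤ dist Y₁ Y₂ := by
    linarith [dist_add_dist_of_mem_segment hZ, dist_nonneg (x := Z) (y := Y₂)]
  calc infDist Z Γ ≤ infDist X Γ + dist Z X := infDist_le_infDist_add_dist
    _ ≤ infDist X Γ + (dist Y₁ Z + dist Y₁ X) := by gcongr; exact dist_triangle_left _ _ _
    _ < infDist X Γ + (dist Y₁ Y₂ + r) := by linarith [mem_ball.1 hY₁]

theorem infDist_lt_min_add_of_mem_segment {Γ : Set E} {X₁ X₂ Y₁ Y₂ Z : E} {r : ℝ}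
    (hZ : Z ∈ segment ℝ Y₁ Y₂) (hY₁ : Y₁ ∈ ball X₁ r) (hY₂ : Y₂ ∈ ball X₂ r) :
    infDist Z Γ < min (infDist X₁ Γ) (infDist X₂ Γ) + (dist Y₁ Y₂ + r) := by
  rw [← min_add_add_right]
  refine lt_min (infDist_lt_add_of_mem_segment hZ hY₁) ?_
  rw [dist_comm]
  exact infDist_lt_add_of_mem_segment (segment_symm ℝ Y₁ Y₂ ▸ hZ) hY₂

end SegmentChain

theorem Real.rpow_div_sub_eq_div_rpow_neg {Λ a b : ℝ} (hΛ : 0 < Λ) (hab : a - b ≠ 0) :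
    Λ ^ (a / (a - b)) = Λ / Λ ^ (-b / (a - b)) := by
  rw [show a / (a - b) = 1 - -b / (a - b) by field_simp; ring, Real.rpow_sub hΛ, Real.rpow_one]

theorem chain_length_le {n d K : ℕ} {c Λ s L : ℝ} (hdn : d + 1 < n) (hc : 0 < c)
    (hΛ : 1 ≤ Λ) (hs : 0 < s) (hL : L ≤ 2 * Λ * s)
    (hK : (K : ℝ) ≤ L / (c * Λ ^ (-(d : ℝ) / ((n : ℝ) - 1 - (d : ℝ))) * s / 4) + 1) :
    ((K + 1 : ℕ) : ℝ) ≤ (8 / c + 2) * Λ ^ (((n : ℝ) - 1) / ((n : ℝ) - 1 - (d : ℝ))) := by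
  have he : 0 < (n : ℝ) - 1 - d := by
    have : (d : ℝ) + 1 < n := by exact_mod_cast hdn
    linarith
  have hΛ₀ : 0 < Λ := one_pos.trans_le hΛ
  have hpow := Real.rpow_div_sub_eq_div_rpow_neg (a := (n : ℝ) - 1) (b := d) hΛ₀ he.ne'
  have hone : 1 ≤ Λ ^ (((n : ℝ) - 1) / ((n : ℝ) - 1 - (d : ℝ))) :=
    Real.one_le_rpow hΛ (div_nonneg (by linarith [d.cast_nonneg (α := ℝ)]) he.le)
  have hstep : L / (c * Λ ^ (-(d : ℝ) / ((n : ℝ) - 1 - (d : ℝ))) * s / 4)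
      ≤ 8 / c * Λ ^ (((n : ℝ) - 1) / ((n : ℝ) - 1 - (d : ℝ))) := by
    have hq : 0 < Λ ^ (-(d : ℝ) / ((n : ℝ) - 1 - (d : ℝ))) := Real.rpow_pos_of_pos hΛ₀ _
    rw [hpow, div_le_iff₀ (by positivity)]
    calc L ≤ 2 * Λ * s := hL
      _ = 8 / c * (Λ / Λ ^ (-(d : ℝ) / ((n : ℝ) - 1 - (d : ℝ))))
          * (c * Λ ^ (-(d : ℝ) / ((n : ℝ) - 1 - (d : ℝ))) * s / 4) := by
        field_simp
        ring
  push_cast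
  linarith

theorem harnack_chain_of_balls_general (n d : ℕ) (C₀ c : ℝ)
    (hdn : d + 1 < n) (hc : c ∈ Set.Ioo (0 : ℝ) 1) :
    ∃ C : ℝ, 0 < C ∧
      ∀ Γ : Set (Pt n), IsClosed Γ → Γ.Nonempty → AhlforsRegular n d C₀ Γ →
        HarnackChainProp n d Γ c →
        ∀ Λ s : ℝ, 1 ≤ Λ → 0 < s →
          ∀ X₁ X₂ : Pt n, X₁ ∉ Γ → X₂ ∉ Γ →
            s ≤ infDist X₁ Γ → s ≤ infDist X₂ Γ → dist X₁ X₂ ≤ Λ * s →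
            let τ : ℝ := c * Λ ^ (-(d : ℝ) / ((n : ℝ) - 1 - (d : ℝ))) * s
            ∃ N : ℕ, (N : ℝ) ≤ C * Λ ^ (((n : ℝ) - 1) / ((n : ℝ) - 1 - (d : ℝ))) ∧
              ∃ Z : ℕ → Pt n,
                let B : ℕ → Set (Pt n) := fun j =>
                  if j = 0 then ball X₁ (s / 2)
                  else if j = N + 1 then ball X₂ (s / 2)
                  else ball (Z j) (τ / 4)
                (∀ j ≤ N, (B j ∩ B (j + 1)).Nonempty) ∧
                (∀ j, 1 ≤ j → j ≤ N →
                  (∀ Y ∈ B j, 3 / 4 * τ ≤ infDist Y Γ) ∧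
                  (∃ Y ∈ B j,
                    infDist Y Γ < min (infDist X₁ Γ) (infDist X₂ Γ) + 3 * Λ * s)) := by
  have hc₀ := hc.1
  refine ⟨8 / c + 2, by positivity, ?_⟩
  intro Γ _ _ _ hchain Λ s hΛ hs X₁ X₂ hX₁ hX₂ hδ₁ hδ₂ hX τ
  have hτ : 0 < τ := by positivity
  have hΛs : s ≤ Λ * s := le_mul_of_one_le_left hs.le hΛ
  obtain ⟨Y₁, hY₁, Y₂, hY₂, hseg⟩ := hchain Λ s hΛ hs X₁ X₂ hX₁ hX₂ hδ₁ hδ₂ hX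
  have hY : dist Y₁ Y₂ < Λ * s + s := by
    have := dist_triangle4 Y₁ X₁ X₂ Y₂
    rw [dist_comm X₂] at this
    linarith [mem_ball.1 hY₁, mem_ball.1 hY₂]
  obtain ⟨K, hK₀, hK, hstep⟩ :=
    exists_segmentChain_dist_succ_lt Y₁ Y₂ (r := τ / 4) (by positivity)
  set Z := segmentChain Y₁ Y₂ K
  refine ⟨K + 1, chain_length_le hdn hc₀ hΛ hs (L := dist Y₁ Y₂) (by linarith) hK, Z, ?_⟩
  intro B
  refine ⟨chain_inter_nonempty Z (by positivity) (by simpa [Z] using hY₁)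
      (by simpa [Z, segmentChain_succ_self _ _ hK₀] using hY₂)
      fun j => (hstep j).trans (by linarith),
    fun j hj₁ hjK => ?_⟩
  have hBj : B j = ball (Z j) (τ / 4) := by
    simp only [B]; rw [if_neg (by omega), if_neg (by omega)]
  have hZ := segmentChain_mem_segment Y₁ Y₂ hj₁ hjK
  rw [hBj]
  refine ⟨fun Y hY => ?_, Z j, mem_ball_self (by positivity), ?_⟩
  · have := hseg _ hZ
    have := infDist_le_infDist_add_dist (s := Γ) (x := Z j) (y := Y)
    rw [mem_ball'] at hY
    linarith
  · have := infDist_lt_min_add_of_mem_segment (Γ := Γ) hZ hY₁ hY₂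
    linarith

/-- Remark 2.4: given the Harnack chain lemma, two points `X₁, X₂` of `Ω` with `δ(Xᵢ) ≥ s`
and `|X₁ - X₂| ≤ Λ s` can be joined by a chain of at most `C Λ^{(n-1)/(n-1-d)}` balls
`B₀ = B(X₁, s/2)`, `B_j = B(Z_j, τ/4)` (`1 ≤ j ≤ N`), `B_{N+1} = B(X₂, s/2)` with
`τ = c Λ^{-d/(n-1-d)} s`, consecutive balls intersecting, and each intermediate ball at
distance at least `(3/4)τ` and less than `min{δ(X₁), δ(X₂)} + 3Λs` from `Γ`. -/
theorem harnack_chain_of_balls (n d : ℕ) (C₀ c : ℝ)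
    (hd : 1 ≤ d) (hdn : d + 1 < n) (hC₀ : 1 ≤ C₀) (hc : c ∈ Set.Ioo (0 : ℝ) 1) :
    ∃ C : ℝ, 0 < C ∧
      ∀ Γ : Set (Pt n), IsClosed Γ → Γ.Nonempty → AhlforsRegular n d C₀ Γ →
        HarnackChainProp n d Γ c →
        ∀ Λ s : ℝ, 1 ≤ Λ → 0 < s →
          ∀ X₁ X₂ : Pt n, X₁ ∉ Γ → X₂ ∉ Γ →
            s ≤ infDist X₁ Γ → s ≤ infDist X₂ Γ → dist X₁ X₂ ≤ Λ * s →
            let τ : ℝ := c * Λ ^ (-(d : ℝ) / ((n : ℝ) - 1 - (d : ℝ))) * s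
            ∃ N : ℕ, (N : ℝ) ≤ C * Λ ^ (((n : ℝ) - 1) / ((n : ℝ) - 1 - (d : ℝ))) ∧
              ∃ Z : ℕ → Pt n,
                let B : ℕ → Set (Pt n) := fun j =>
                  if j = 0 then ball X₁ (s / 2)
                  else if j = N + 1 then ball X₂ (s / 2)
                  else ball (Z j) (τ / 4)
                (∀ j ≤ N, (B j ∩ B (j + 1)).Nonempty) ∧
                (∀ j, 1 ≤ j → j ≤ N →
                  (∀ Y ∈ B j, 3 / 4 * τ ≤ infDist Y Γ) ∧
                  (∃ Y ∈ B j,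
                    infDist Y Γ < min (infDist X₁ Γ) (infDist X₂ Γ) + 3 * Λ * s)) :=
  harnack_chain_of_balls_general n d C₀ c hdn hc
end
end

section
/- Let n, d be integers with 1 ≤ d < n−1 and Γ ⊂ ℝⁿ a closed d-Ahlfors regular set with constant C₀. There exists C > 0, depending only on n, d, C₀, such that for every q ∈ Γ and r > 0, C⁻¹ r^{d+1} ≤ ∫_{B(q,r)} δ(Y)^{d−n+1} dY ≤ C r^{d+1}, where the integral is with respect to Lebesgue measure (note that Γ has Lebesgue measure zero so the domain of integration may equivalently be taken to be B(q,r) ∖ Γ). -/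
/-!
Every `Y ∈ B(q, r)` has `δ(Y) < r`, and the exponent `d - n + 1` is negative, so the weight is at
least `r^(d-n+1)` on `B(q, r) \ Γ`; since `dim_H Γ ≤ d < n`, `Γ` is Lebesgue-null and this gives
the lower bound `≈ r^(d+1)`.

For the upper bound, if `δ(Y) ≤ t ≤ r` then the lower Ahlfors bound at a nearest point of `Γ` puts
`H^d`-mass `≳ t^d` of `Γ ∩ B(q, 3r)` inside `B(Y, 2t)`. Integrating over such `Y` and exchanging
the order of integration against the upper Ahlfors bound `H^d(Γ ∩ B(q, 3r)) ≲ r^d` yields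
`|{Y ∈ B(q, r) : δ(Y) ≤ t}| ≲ t^(n-d) r^d`. On the dyadic shell `r 2^(-k-1) < δ ≤ r 2^(-k)` the
weight is `≲ (r 2^(-k))^(d-n+1)`, so the shell contributes `≲ 2^(-k) r^(d+1)`, and the geometric
series sums to `≲ r^(d+1)`.
-/

open MeasureTheory Metric Set
open scoped ENNReal NNReal Topology

noncomputable section

theorem exists_mem_Ioc_div_two_pow {x R : ℝ} (hx : 0 < x) (hxR : x ≤ R) :
    ∃ k : ℕ, x ∈ Ioc (R / 2 ^ (k + 1)) (R / 2 ^ k) := by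
  obtain ⟨k, hk, hk'⟩ := exists_nat_pow_near ((one_le_div hx).2 hxR) one_lt_two
  refine ⟨k, ?_, ?_⟩
  · rwa [div_lt_iff₀ (by positivity), mul_comm, ← div_lt_iff₀ hx]
  · rwa [le_div_iff₀ (by positivity), mul_comm, ← le_div_iff₀ hx]

namespace MeasureTheory

theorem Measure.addHaar_eq_zero_of_hausdorffMeasure_ne_top {E : Type*} [NormedAddCommGroup E]
    [NormedSpace ℝ E] [FiniteDimensional ℝ E] [MeasurableSpace E] [BorelSpace E]
    (μ : Measure E) [μ.IsAddHaarMeasure] {s : Set E} {d : ℝ≥0}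
    (hd : d < Module.finrank ℝ E) (hs : μH[d] s ≠ ∞) : μ s = 0 := by
  have hac : μ ≪ μH[((Module.finrank ℝ E : ℝ≥0) : ℝ)] := by
    exact_mod_cast Measure.absolutelyContinuous_isAddHaarMeasure μ μH[Module.finrank ℝ E]
  exact measure_zero_of_dimH_lt hac
    ((dimH_le_of_hausdorffMeasure_ne_top hs).trans_lt (by exact_mod_cast hd))

theorem mul_measure_le_of_le_measure_ball {X : Type*} [PseudoMetricSpace X] [MeasurableSpace X]
    [OpensMeasurableSpace X] [SecondCountableTopology X] (μ ν : Measure X) [SFinite μ]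
    [SFinite ν] {A : Set X} {ρ : ℝ} {c M : ℝ≥0∞} (hc : ∀ y ∈ A, c ≤ ν (ball y ρ))
    (hM : ∀ x, μ (ball x ρ) ≤ M) : c * μ A ≤ M * ν univ := by
  -- both sides bound the `(μ.restrict A).prod ν`-measure of `{(y, x) | dist x y < ρ}`
  set S : Set (X × X) := {p | dist p.2 p.1 < ρ}
  have hS : MeasurableSet S := measurable_dist.comp measurable_swap measurableSet_Iio
  calc c * μ A = ∫⁻ _ in A, c ∂μ := (setLIntegral_const A c).symm
    _ ≤ ∫⁻ y in A, ν (ball y ρ) ∂μ := setLIntegral_mono (measurable_measure_prodMk_left hS) hc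
    _ = (μ.restrict A).prod ν S := (Measure.prod_apply hS).symm
    _ = ∫⁻ x, μ.restrict A (ball x ρ) ∂ν := by
      rw [Measure.prod_apply_symm hS]
      congr! with x
      ext y
      simp [S, dist_comm]
    _ ≤ ∫⁻ _, M ∂ν := lintegral_mono fun x => (Measure.restrict_apply_le _ _).trans (hM x)
    _ = M * ν univ := lintegral_const M

theorem lintegral_rpow_le_of_measure_sublevel_le {X : Type*} [MeasurableSpace X]
    (μ : Measure X) {s : Set X} {f : X → ℝ} {K R β : ℝ} (hβ : 1 < β) (hR : 0 < R)
    (hf : ∀ x ∈ s, f x ∈ Icc 0 R)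
    (hμ : ∀ t, 0 < t → t ≤ R → μ {x ∈ s | f x ≤ t} ≤ ENNReal.ofReal (K * t ^ β)) :
    ∫⁻ x in s, ENNReal.ofReal (f x ^ (1 - β)) ∂μ ≤ ENNReal.ofReal (2 ^ β * K * R) := by
  set g : X → ℝ≥0∞ := fun x => ENNReal.ofReal (f x ^ (1 - β))
  set A : ℕ → Set X := fun k => {x ∈ s | f x ∈ Ioc (R / 2 ^ (k + 1)) (R / 2 ^ k)}
  have hcover : s ⊆ {x ∈ s | f x = 0} ∪ ⋃ k, A k := by
    intro x hx
    rcases (hf x hx).1.eq_or_lt with h0 | hpos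
    · exact Or.inl ⟨hx, h0.symm⟩
    · obtain ⟨k, hk⟩ := exists_mem_Ioc_div_two_pow hpos (hf x hx).2
      exact Or.inr (mem_iUnion.2 ⟨k, hx, hk⟩)
  -- `Real.rpow` gives `0 ^ (1 - β) = 0`, so the zero set of `f` does not contribute
  have hzero : ∫⁻ x in {x ∈ s | f x = 0}, g x ∂μ = 0 := by
    have hg0 : ∀ x ∈ {x ∈ s | f x = 0}, g x ≤ 0 := fun x hx => by
      simp [g, hx.2, Real.zero_rpow (by linarith : 1 - β ≠ 0)]
    simpa using setLIntegral_mono measurable_const hg0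
  have hshell : ∀ k : ℕ,
      ∫⁻ x in A k, g x ∂μ ≤ ENNReal.ofReal (2 ^ β * K * R) * 2⁻¹ ^ (k + 1) := by
    intro k
    set t : ℝ := R / 2 ^ (k + 1) with ht_def
    have ht : 0 < t := by positivity
    have hvol : μ (A k) ≤ ENNReal.ofReal (K * (2 * t) ^ β) := by
      have h2t : 2 * t = R / 2 ^ k := by simp only [t]; field_simp; ring
      have hsub : A k ⊆ {x ∈ s | f x ≤ R / 2 ^ k} := fun x hx => ⟨hx.1, hx.2.2⟩
      rw [h2t]
      exact (measure_mono hsub).trans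
        (hμ _ (by positivity) (div_le_self hR.le (one_le_pow₀ one_le_two)))
    calc ∫⁻ x in A k, g x ∂μ ≤ ∫⁻ _ in A k, ENNReal.ofReal (t ^ (1 - β)) ∂μ :=
          setLIntegral_mono measurable_const fun x hx => ENNReal.ofReal_le_ofReal
            (Real.rpow_le_rpow_of_nonpos ht hx.2.1.le (by linarith))
      _ = ENNReal.ofReal (t ^ (1 - β)) * μ (A k) := setLIntegral_const _ _
      _ ≤ ENNReal.ofReal (t ^ (1 - β)) * ENNReal.ofReal (K * (2 * t) ^ β) := by gcongr
      _ = ENNReal.ofReal (2 ^ β * K * R * 2⁻¹ ^ (k + 1)) := by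
          rw [← ENNReal.ofReal_mul (by positivity)]
          congr 1
          have : t ^ (1 - β) * t ^ β = t := by
            rw [← Real.rpow_add ht, sub_add_cancel, Real.rpow_one]
          calc t ^ (1 - β) * (K * (2 * t) ^ β) = 2 ^ β * K * (t ^ (1 - β) * t ^ β) := by
                rw [Real.mul_rpow zero_le_two ht.le]; ring
            _ = 2 ^ β * K * R * 2⁻¹ ^ (k + 1) := by
                rw [this, ht_def, div_eq_mul_inv, ← inv_pow]; ring
      _ = ENNReal.ofReal (2 ^ β * K * R) * 2⁻¹ ^ (k + 1) := by
          rw [ENNReal.ofReal_mul' (by positivity), ENNReal.ofReal_pow (by norm_num),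
            ENNReal.ofReal_inv_of_pos two_pos, ENNReal.ofReal_ofNat]
  calc ∫⁻ x in s, g x ∂μ ≤ ∫⁻ x in {x ∈ s | f x = 0} ∪ ⋃ k, A k, g x ∂μ :=
        lintegral_mono_set hcover
    _ ≤ ∫⁻ x in {x ∈ s | f x = 0}, g x ∂μ + ∫⁻ x in ⋃ k, A k, g x ∂μ :=
        lintegral_union_le _ _ _
    _ ≤ ∑' k, ∫⁻ x in A k, g x ∂μ := by rw [hzero, zero_add]; exact lintegral_iUnion_le _ _
    _ ≤ ∑' k : ℕ, ENNReal.ofReal (2 ^ β * K * R) * 2⁻¹ ^ (k + 1) := ENNReal.tsum_le_tsum hshell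
    _ = ENNReal.ofReal (2 ^ β * K * R) := by
        rw [ENNReal.tsum_mul_left, ENNReal.tsum_geometric_add_one, ENNReal.one_sub_inv_two,
          inv_inv, ENNReal.inv_mul_cancel (by norm_num) (by norm_num), mul_one]

end MeasureTheory

namespace AhlforsRegular

variable {n d : ℕ} {C₀ : ℝ} {Γ : Set (Pt n)} {q : Pt n} {r : ℝ}

theorem volume_ball_inter_eq_zero (hdn : d < n) (hΓ : AhlforsRegular n d C₀ Γ) (hq : q ∈ Γ)
    (hr : 0 < r) : volume (ball q r ∩ Γ) = 0 :=
  Measure.addHaar_eq_zero_of_hausdorffMeasure_ne_top volume (d := d) (by simpa using hdn)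
    (by simpa using ne_top_of_le_ne_top ENNReal.ofReal_ne_top (hΓ q hq r hr).2)

theorem ofReal_le_hausdorffMeasure_ball (hΓ : AhlforsRegular n d C₀ Γ) (hΓc : IsClosed Γ)
    (hq : q ∈ Γ) {Y : Pt n} (hY : Y ∈ ball q r) {t : ℝ} (ht : 0 < t) (htr : t ≤ r)
    (hYt : infDist Y Γ ≤ t) :
    ENNReal.ofReal (C₀⁻¹ * t ^ d) ≤
      μH[(d : ℝ)].restrict (Γ ∩ ball q (3 * r)) (ball Y (2 * t)) := by
  obtain ⟨z, hzΓ, hz⟩ := hΓc.exists_infDist_eq_dist ⟨q, hq⟩ Y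
  have hYz : dist z Y ≤ t := by rw [dist_comm, ← hz]; exact hYt
  have hsub : ball z t ∩ Γ ⊆ ball Y (2 * t) ∩ (Γ ∩ ball q (3 * r)) := by
    rintro w ⟨hwz, hwΓ⟩
    rw [mem_ball] at hY hwz
    refine ⟨?_, hwΓ, ?_⟩ <;> rw [mem_ball]
    · linarith [dist_triangle w z Y]
    · linarith [dist_triangle w z Y, dist_triangle w Y q]
  calc ENNReal.ofReal (C₀⁻¹ * t ^ d) ≤ μH[(d : ℝ)] (ball z t ∩ Γ) := (hΓ z hzΓ t ht).1
    _ ≤ μH[(d : ℝ)] (ball Y (2 * t) ∩ (Γ ∩ ball q (3 * r))) := measure_mono hsub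
    _ = _ := (Measure.restrict_apply measurableSet_ball).symm

theorem volume_ball_infDist_le (hC₀ : 0 < C₀) (hdn : d < n) (hΓ : AhlforsRegular n d C₀ Γ)
    (hΓc : IsClosed Γ) (hq : q ∈ Γ) {t : ℝ} (ht : 0 < t) (htr : t ≤ r) :
    volume {Y ∈ ball q r | infDist Y Γ ≤ t} ≤
      ENNReal.ofReal (C₀ ^ 2 * 2 ^ n * 3 ^ d * (volume (ball (0 : Pt n) 1)).toReal *
        t ^ (n - d) * r ^ d) := by
  set b := (volume (ball (0 : Pt n) 1)).toReal
  set ν := μH[(d : ℝ)].restrict (Γ ∩ ball q (3 * r))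
  have hν : ν univ ≤ ENNReal.ofReal (C₀ * (3 * r) ^ d) := by
    rw [Measure.restrict_apply_univ, inter_comm]
    exact (hΓ q hq _ (by linarith)).2
  have : IsFiniteMeasure ν := ⟨hν.trans_lt ENNReal.ofReal_lt_top⟩
  have hball : ∀ x : Pt n, volume (ball x (2 * t)) ≤ ENNReal.ofReal ((2 * t) ^ n * b) := by
    intro x
    rw [Measure.addHaar_ball_of_pos _ _ (by positivity), finrank_euclideanSpace_fin,
      ENNReal.ofReal_mul (by positivity), ENNReal.ofReal_toReal measure_ball_lt_top.ne]
  have hcount := mul_measure_le_of_le_measure_ball volume ν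
    (A := {Y ∈ ball q r | infDist Y Γ ≤ t})
    (fun Y hY => ofReal_le_hausdorffMeasure_ball hΓ hΓc hq hY.1 ht htr hY.2) hball
  have hc : ENNReal.ofReal (C₀⁻¹ * t ^ d) ≠ 0 := by positivity
  rw [← ENNReal.mul_le_mul_iff_right hc ENNReal.ofReal_ne_top]
  calc _ ≤ _ := hcount
    _ ≤ ENNReal.ofReal ((2 * t) ^ n * b) * ENNReal.ofReal (C₀ * (3 * r) ^ d) := by gcongr
    _ = _ := ?_
  rw [← ENNReal.ofReal_mul (by positivity), ← ENNReal.ofReal_mul (by positivity)]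
  congr 1
  rw [mul_pow, mul_pow, ← Nat.add_sub_cancel' hdn.le, pow_add, Nat.add_sub_cancel_left]
  field_simp
  ring

theorem lintegral_ball_infDist_rpow_le (hC₀ : 0 < C₀) (hdn : d + 1 < n)
    (hΓ : AhlforsRegular n d C₀ Γ) (hΓc : IsClosed Γ) (hq : q ∈ Γ) (hr : 0 < r) :
    ∫⁻ Y in ball q r, ENNReal.ofReal (infDist Y Γ ^ ((d : ℝ) - n + 1)) ≤
      ENNReal.ofReal (2 ^ ((n : ℝ) - d) *
        (C₀ ^ 2 * 2 ^ n * 3 ^ d * (volume (ball (0 : Pt n) 1)).toReal) * r ^ (d + 1)) := by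
  have hβ : ((n - d : ℕ) : ℝ) = (n : ℝ) - d := Nat.cast_sub (by omega)
  have hexp : (d : ℝ) - n + 1 = 1 - ((n : ℝ) - d) := by ring
  set K := C₀ ^ 2 * 2 ^ n * 3 ^ d * (volume (ball (0 : Pt n) 1)).toReal
  have hsublevel : ∀ t, 0 < t → t ≤ r →
      volume {Y ∈ ball q r | infDist Y Γ ≤ t} ≤ ENNReal.ofReal (K * r ^ d * t ^ ((n : ℝ) - d)) := by
    intro t ht htr
    rw [← hβ, Real.rpow_natCast]
    exact (volume_ball_infDist_le hC₀ (by omega) hΓ hΓc hq ht htr).trans_eq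
      (by simp only [K]; ring_nf)
  calc ∫⁻ Y in ball q r, ENNReal.ofReal (infDist Y Γ ^ ((d : ℝ) - n + 1))
      ≤ ENNReal.ofReal (2 ^ ((n : ℝ) - d) * (K * r ^ d) * r) := by
        rw [hexp]
        exact lintegral_rpow_le_of_measure_sublevel_le volume
          (by rw [← hβ]; exact_mod_cast (by omega : 1 < n - d)) hr
          (fun Y hY => ⟨infDist_nonneg, (infDist_le_dist_of_mem hq).trans (mem_ball.1 hY).le⟩)
          hsublevel
    _ = ENNReal.ofReal (2 ^ ((n : ℝ) - d) * K * r ^ (d + 1)) := by ring_nf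

theorem ofReal_le_lintegral_ball_infDist_rpow (hdn : d < n) (hΓ : AhlforsRegular n d C₀ Γ)
    (hΓc : IsClosed Γ) (hq : q ∈ Γ) (hr : 0 < r) :
    ENNReal.ofReal ((volume (ball (0 : Pt n) 1)).toReal * r ^ (d + 1)) ≤
      ∫⁻ Y in ball q r, ENNReal.ofReal (infDist Y Γ ^ ((d : ℝ) - n + 1)) := by
  set α : ℝ := (d : ℝ) - n + 1
  have hα : α ≤ 0 := by
    have : (d : ℝ) + 1 ≤ n := by exact_mod_cast hdn
    simp only [α]; linarith
  have hpt : ∀ Y ∈ ball q r \ Γ, ENNReal.ofReal (r ^ α) ≤ ENNReal.ofReal (infDist Y Γ ^ α) := by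
    rintro Y ⟨hYq, hYΓ⟩
    refine ENNReal.ofReal_le_ofReal (Real.rpow_le_rpow_of_nonpos ?_ ?_ hα)
    · exact (hΓc.notMem_iff_infDist_pos ⟨q, hq⟩).1 hYΓ
    · exact (infDist_le_dist_of_mem hq).trans (mem_ball.1 hYq).le
  have hrpow : r ^ α * r ^ n = r ^ (d + 1) := by
    rw [← Real.rpow_natCast r n, ← Real.rpow_add hr, ← Real.rpow_natCast]
    push_cast [α]; ring_nf
  calc ENNReal.ofReal ((volume (ball (0 : Pt n) 1)).toReal * r ^ (d + 1))
      = ENNReal.ofReal (r ^ α) * volume (ball q r) := by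
        rw [Measure.addHaar_ball_of_pos _ _ hr, finrank_euclideanSpace_fin, ← mul_assoc,
          ← ENNReal.ofReal_mul (by positivity), hrpow, ENNReal.ofReal_mul' (by positivity),
          ENNReal.ofReal_toReal measure_ball_lt_top.ne, mul_comm]
    _ = ENNReal.ofReal (r ^ α) * volume (ball q r \ Γ) := by
        rw [measure_sdiff_null' (volume_ball_inter_eq_zero hdn hΓ hq hr)]
    _ = ∫⁻ _ in ball q r \ Γ, ENNReal.ofReal (r ^ α) := (setLIntegral_const _ _).symm
    _ ≤ ∫⁻ Y in ball q r \ Γ, ENNReal.ofReal (infDist Y Γ ^ α) :=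
        setLIntegral_mono' (measurableSet_ball.diff hΓc.measurableSet) hpt
    _ ≤ ∫⁻ Y in ball q r, ENNReal.ofReal (infDist Y Γ ^ α) := lintegral_mono_set sdiff_subset

end AhlforsRegular

theorem weight_estimate_boundary_general (n d : ℕ) (C₀ : ℝ)
    (hdn : d + 1 < n) (hC₀ : 1 ≤ C₀) :
    ∃ C : ℝ, 0 < C ∧
      ∀ Γ : Set (Pt n), IsClosed Γ → Γ.Nonempty → AhlforsRegular n d C₀ Γ →
        ∀ q ∈ Γ, ∀ r : ℝ, 0 < r →
          ENNReal.ofReal (C⁻¹ * r ^ (d + 1)) ≤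
              (∫⁻ Y in ball q r, ENNReal.ofReal (infDist Y Γ ^ ((d : ℝ) - n + 1))) ∧
            (∫⁻ Y in ball q r, ENNReal.ofReal (infDist Y Γ ^ ((d : ℝ) - n + 1))) ≤
              ENNReal.ofReal (C * r ^ (d + 1)) := by
  set b := (volume (ball (0 : Pt n) 1)).toReal
  have hb : 0 < b := ENNReal.toReal_pos (measure_ball_pos volume 0 one_pos).ne'
    measure_ball_lt_top.ne
  set K := 2 ^ ((n : ℝ) - d) * (C₀ ^ 2 * 2 ^ n * 3 ^ d * b)
  refine ⟨max b⁻¹ K, lt_max_of_lt_left (inv_pos.2 hb), fun Γ hΓc _ hΓ q hq r hr => ⟨?_, ?_⟩⟩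
  · refine le_trans ?_ (hΓ.ofReal_le_lintegral_ball_infDist_rpow (by omega) hΓc hq hr)
    exact ENNReal.ofReal_le_ofReal <| mul_le_mul_of_nonneg_right
      (inv_le_of_inv_le₀ hb (le_max_left _ _)) (by positivity)
  · refine (hΓ.lintegral_ball_infDist_rpow_le (by linarith) hdn hΓc hq hr).trans ?_
    exact ENNReal.ofReal_le_ofReal <| mul_le_mul_of_nonneg_right (le_max_right _ _)
      (by positivity)

/-- Estimate on the weight at the boundary (Lemma 2.3 (ii) of David–Feneuil–Mayboroda):
for `q ∈ Γ` and `r > 0`,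
`m(B(q,r)) = ∫_{B(q,r)} δ(Y)^{d-n+1} dY ≈ r^{d+1}`. -/
theorem weight_estimate_boundary (n d : ℕ) (C₀ : ℝ)
    (hd : 1 ≤ d) (hdn : d + 1 < n) (hC₀ : 1 ≤ C₀) :
    ∃ C : ℝ, 0 < C ∧
      ∀ Γ : Set (Pt n), IsClosed Γ → Γ.Nonempty → AhlforsRegular n d C₀ Γ →
        ∀ q ∈ Γ, ∀ r : ℝ, 0 < r →
          ENNReal.ofReal (C⁻¹ * r ^ (d + 1)) ≤
              (∫⁻ Y in ball q r, ENNReal.ofReal (infDist Y Γ ^ ((d : ℝ) - n + 1))) ∧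
            (∫⁻ Y in ball q r, ENNReal.ofReal (infDist Y Γ ^ ((d : ℝ) - n + 1))) ≤
              ENNReal.ofReal (C * r ^ (d + 1)) :=
  weight_estimate_boundary_general n d C₀ hdn hC₀
end
end

section
/- Let n, d be integers with 1 ≤ d ≤ n and Γ ⊂ ℝⁿ a closed d-Ahlfors regular set with constant C₀. Then there exist constants a₀ > 0, A₁ > 0 and γ > 0, depending only on d, n, C₀, such that for each k ∈ ℤ there is a countable collection 𝔻_k = {Q_j^k : j ∈ J_k} of Borel subsets of Γ (dyadic cubes) with the following properties: (i) Γ = ⋃_{j ∈ J_k} Q_j^k for each k ∈ ℤ; (ii) if m ≥ k then for all i, j either Q_i^m ⊆ Q_j^k or Q_i^m ∩ Q_j^k = ∅; (iii) for each pair (j,k) and each m < k there is a unique i ∈ J_m such that Q_j^k ⊆ Q_i^m; (iv) diam Q_j^k ≤ A₁ 2^{−k}; (v) each Q_j^k contains a surface ball B(x_j^k, a₀ 2^{−k}) ∩ Γ for some x_j^k ∈ Γ; (vi) H^d({q ∈ Q_j^k : dist(q, Γ ∖ Q_j^k) ≤ ρ 2^{−k}}) ≤ A₁ ρ^{γ}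 H^d(Q_j^k) for all (j,k) and all ρ ∈ (0, a₀). -/
open MeasureTheory Metric Set
open scoped ENNReal NNReal Topology

noncomputable section

/-!
Christ's construction. Fix `16⁻ᵐ`-separated `16⁻ᵐ`-nets `N_m` of `Γ` and let the parent of a point
of `N_{m+1}` be its nearest point in `N_m`. A point of `N_m` is admissible for `q ∈ Γ` if it lies
within `5 · 16⁻ᵐ` of `q`, and is the point of `N_m` within `16⁻ᵐ / 8` of `q` when there is one;
parents of admissible points are admissible. There are finitely many admissible points at each
level, so König's lemma gives every `q` a branch of admissible points closed under parents, and
taking the first one in fixed enumerations of the nets makes it depend measurably on `q`. The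
level-`m` cube with center `x` consists of the points whose branch passes through `x`: cubes are
nested since branches are closed under parents, lie within `5 · 16⁻ᵐ` of their centers, and
contain the ball of radius `16⁻ᵐ / 8` around them.

A level-`m` subcube of `Q` meeting the part of `Q` within `16⁻ᵐ⁻²` of `Γ \ Q` lies within
`≈ 16⁻ᵐ` of `Γ \ Q`, while its inner ball misses that layer and, by Ahlfors regularity, carries a
fixed proportion `c` of its mass. So the measure of the layer shrinks by the factor `1 - c`
whenever its width shrinks by `256`, which is a power decay in the width.
-/

open Bornology

namespace Metric.IsSeparated

variable {X : Type*} [MetricSpace X] {ε : ℝ≥0} {s : Set X}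

lemma lt_dist (hs : IsSeparated ε s) {x y : X} (hx : x ∈ s) (hy : y ∈ s) (hxy : x ≠ y) :
    (ε : ℝ) < dist x y := by
  have : (ε : ℝ≥0∞) < edist x y := hs hx hy hxy
  rwa [edist_nndist, ENNReal.coe_lt_coe, ← NNReal.coe_lt_coe, coe_nndist] at this

lemma isClosed (hε : 0 < ε) (hs : IsSeparated ε s) : IsClosed s :=
  isClosed_of_pairwise_le_dist (NNReal.coe_pos.2 hε) fun _ hx _ hy hxy => (hs.lt_dist hx hy hxy).le

lemma finite_inter_closedBall [ProperSpace X] (hε : 0 < ε) (hs : IsSeparated ε s) (x : X)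
    (r : ℝ) : (s ∩ closedBall x r).Finite := by
  obtain ⟨t, htf, hcover⟩ :=
    totallyBounded_iff.1 (isCompact_closedBall x r).totallyBounded (ε / 2) (by positivity)
  have hsub (y : X) : (s ∩ ball y (ε / 2)).Subsingleton := fun a ha b hb => by
    by_contra hab
    linarith [hs.lt_dist ha.1 hb.1 hab, dist_triangle_right a b y, mem_ball.1 ha.2,
      mem_ball.1 hb.2]
  refine (htf.biUnion fun y _ => (hsub y).finite).subset fun p hp => ?_
  obtain ⟨y, hy, hpy⟩ := mem_iUnion₂.1 (hcover hp.2)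
  exact mem_biUnion hy ⟨hp.1, hpy⟩

lemma countable [ProperSpace X] (hε : 0 < ε) (hs : IsSeparated ε s) : s.Countable := by
  rcases s.eq_empty_or_nonempty with rfl | ⟨x, -⟩
  · exact countable_empty
  refine (countable_iUnion fun k : ℕ => (hs.finite_inter_closedBall hε x k).countable).mono
    fun p hp => mem_iUnion.2 ⟨⌈dist p x⌉₊, (⟨hp, mem_closedBall.2 (Nat.le_ceil _)⟩ : p ∈ s ∩ _)⟩

end Metric.IsSeparated

lemma Metric.exists_isSeparated_isCover {X : Type*} [MetricSpace X] (ε : ℝ≥0) (s : Set X) :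
    ∃ N ⊆ s, IsSeparated ε N ∧ IsCover ε s N := by
  obtain ⟨N, hN⟩ := zorn_subset {N | N ⊆ s ∧ IsSeparated ε N} fun c hcS hc =>
    ⟨⋃₀ c, ⟨sUnion_subset fun t ht => (hcS ht).1,
      (pairwise_sUnion hc.directedOn).2 fun t ht => (hcS ht).2⟩, fun _ => subset_sUnion_of_mem⟩
  exact ⟨N, hN.1.1, hN.1.2, .of_maximal_isSeparated hN⟩

lemma Set.Finite.exists_mem_forall_of_antitone {α : Type*} {s : Set α} (hs : s.Finite)
    {P : α → ℕ → Prop} (hP : ∀ a, Antitone (P a)) (h : ∀ b, ∃ a ∈ s, P a b) :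
    ∃ a ∈ s, ∀ b, P a b := by
  by_contra! hcon
  choose! f hf using hcon
  obtain ⟨a, ha, hPa⟩ := h (hs.toFinset.sup f)
  exact hf a ha (hP a (Finset.le_sup (hs.mem_toFinset.2 ha)) hPa)

lemma measurable_sInf_setOf {α : Type*} [MeasurableSpace α] {p : α → ℕ → Prop}
    (hp : ∀ k, Measurable (p · k)) : Measurable fun a => sInf {k | p a k} := by
  refine measurable_to_countable' fun k => ?_
  have : (fun a => sInf {k | p a k}) ⁻¹' {k} =
      {a | p a k ∧ ∀ i < k, ¬ p a i} ∪ {a | (∀ i, ¬ p a i) ∧ k = 0} := by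
    ext a
    simp only [mem_preimage, mem_singleton_iff, mem_union, mem_ofPred_eq]
    by_cases h : ∃ i, p a i
    · have hne : ¬ ∀ i, ¬ p a i := fun h' => h' _ h.choose_spec
      simp only [hne, false_and, or_false]
      exact ⟨fun hk => hk ▸ ⟨Nat.sInf_mem h, fun i hi => Nat.notMem_of_lt_sInf hi⟩,
        fun ⟨hk, hlt⟩ => le_antisymm (Nat.sInf_le hk)
          (not_lt.1 fun hlt' => hlt _ hlt' (Nat.sInf_mem h))⟩
    · simp only [not_exists] at h
      simp [h, eq_comm]
  rw [this]
  exact (measurableSet_setOfPred.2 ((hp k).and (Measurable.forall fun i =>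
    Measurable.forall fun _ => (hp i).not))).union
    (measurableSet_setOfPred.2 ((Measurable.forall fun i => (hp i).not).and measurable_const))

lemma ENNReal.le_ofReal_one_sub_mul {a b : ℝ≥0∞} {c : ℝ} (hc₀ : 0 ≤ c) (hc₁ : c ≤ 1)
    (hb : b ≠ ∞) (h : a + ENNReal.ofReal c * b ≤ b) : a ≤ ENNReal.ofReal (1 - c) * b := by
  have hsplit : ENNReal.ofReal (1 - c) * b + ENNReal.ofReal c * b = b := by
    rw [← add_mul, ← ENNReal.ofReal_add (by linarith) hc₀, sub_add_cancel, ENNReal.ofReal_one,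
      one_mul]
  exact (ENNReal.add_le_add_iff_right (ENNReal.mul_ne_top ENNReal.ofReal_ne_top hb)).1
    (h.trans hsplit.ge)

lemma ENNReal.le_ofReal_rpow_mul_of_le_pow {f : ℝ → ℝ≥0∞} (hf : Monotone f) {θ a : ℝ}
    (hθ₀ : 0 < θ) (hθ₁ : θ < 1) (ha₀ : 0 < a) (ha₁ : a ≤ 1) {M : ℝ≥0∞}
    (h : ∀ t : ℕ, f (θ ^ t) ≤ ENNReal.ofReal (a ^ t) * M) {ρ : ℝ} (hρ₀ : 0 < ρ) (hρ₁ : ρ ≤ 1) :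
    f ρ ≤ ENNReal.ofReal (a⁻¹ * ρ ^ (Real.log a / Real.log θ)) * M := by
  have hlogθ : Real.log θ < 0 := Real.log_neg hθ₀ hθ₁
  set x := Real.log ρ / Real.log θ
  have hx : 0 ≤ x := div_nonneg_of_nonpos (Real.log_nonpos hρ₀.le hρ₁) hlogθ.le
  have hθx : θ ^ x = ρ := by
    rw [Real.rpow_def_of_pos hθ₀, mul_div_cancel₀ _ hlogθ.ne, Real.exp_log hρ₀]
  have hax : a ^ x = ρ ^ (Real.log a / Real.log θ) := by
    rw [Real.rpow_def_of_pos ha₀, Real.rpow_def_of_pos hρ₀]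
    congr 1
    ring
  calc f ρ ≤ f (θ ^ ⌊x⌋₊) := hf <| by
        rw [← hθx, ← Real.rpow_natCast]
        exact Real.rpow_le_rpow_of_exponent_ge hθ₀ hθ₁.le (Nat.floor_le hx)
    _ ≤ ENNReal.ofReal (a ^ ⌊x⌋₊) * M := h _
    _ ≤ ENNReal.ofReal (a⁻¹ * ρ ^ (Real.log a / Real.log θ)) * M := by
        gcongr
        rw [← hax, ← Real.rpow_natCast, ← Real.rpow_neg_one, ← Real.rpow_add ha₀]
        exact Real.rpow_le_rpow_of_exponent_ge ha₀ ha₁ (by linarith [Nat.lt_floor_add_one x])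

def dyadicScale (m : ℤ) : ℝ≥0 := 16 ^ (-m)

lemma dyadicScale_pos (m : ℤ) : (0 : ℝ) < dyadicScale m := by
  unfold dyadicScale; positivity

lemma dyadicScale_add (m k : ℤ) : (dyadicScale (m + k) : ℝ) = dyadicScale m * 16 ^ (-k) := by
  simp only [dyadicScale, NNReal.coe_zpow, NNReal.coe_ofNat, neg_add,
    zpow_add₀ (by norm_num : (16 : ℝ) ≠ 0)]

lemma dyadicScale_add_one (m : ℤ) : (dyadicScale (m + 1) : ℝ) = dyadicScale m / 16 := by
  rw [dyadicScale_add]; norm_num; ring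

lemma dyadicScale_add_two (m : ℤ) : (dyadicScale (m + 2) : ℝ) = dyadicScale m / 256 := by
  rw [dyadicScale_add]; norm_num; ring

lemma dyadicScale_eq_two_zpow (m : ℤ) : (dyadicScale m : ℝ) = 2 ^ (-(4 * m)) := by
  simp only [dyadicScale, NNReal.coe_zpow, NNReal.coe_ofNat,
    show (16 : ℝ) = 2 ^ (4 : ℤ) by norm_num, ← zpow_mul]
  ring_nf

lemma dyadicScale_le_two_zpow (k : ℤ) : (dyadicScale ((k + 3) / 4) : ℝ) ≤ 2 ^ (-k) := by
  rw [dyadicScale_eq_two_zpow]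
  exact zpow_le_zpow_right₀ (by norm_num) (by omega)

lemma two_zpow_le_dyadicScale (k : ℤ) : (2 : ℝ) ^ (-k) ≤ 8 * dyadicScale ((k + 3) / 4) := by
  rw [dyadicScale_eq_two_zpow, show (8 : ℝ) = 2 ^ (3 : ℤ) by norm_num, ← zpow_add₀ two_ne_zero]
  exact zpow_le_zpow_right₀ (by norm_num) (by omega)

variable {X : Type*} [MetricSpace X]

def boundaryLayer (Γ Q : Set X) (w : ℝ) : Set X := {p ∈ Q | infDist p (Γ \ Q) ≤ w}

lemma boundaryLayer_mono {Γ Q : Set X} : Monotone (boundaryLayer Γ Q) :=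
  fun _ _ h _ hp => ⟨hp.1, hp.2.trans h⟩

lemma MeasurableSet.boundaryLayer [MeasurableSpace X] [OpensMeasurableSpace X] {Γ Q : Set X}
    (hQ : MeasurableSet Q) (w : ℝ) : MeasurableSet (boundaryLayer Γ Q w) :=
  hQ.inter (measurableSet_le (continuous_infDist_pt _).measurable measurable_const)

/-- The `γ` with `256 ^ (-γ) = 1 - c`: the boundary layers lose the factor `1 - c` each time their
width shrinks by `256`. -/
def decayExponent (c : ℝ) : ℝ := Real.log (1 - c) / Real.log 256⁻¹

lemma decayExponent_nonneg {c : ℝ} (hc₀ : 0 ≤ c) (hc₁ : c < 1) : 0 ≤ decayExponent c :=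
  div_nonneg_of_nonpos (Real.log_nonpos (by linarith) (by linarith))
    (Real.log_nonpos (by norm_num) (by norm_num))

lemma decayExponent_pos {c : ℝ} (hc₀ : 0 < c) (hc₁ : c < 1) : 0 < decayExponent c :=
  div_pos_of_neg_of_neg (Real.log_neg (by linarith) (by linarith))
    (Real.log_neg (by norm_num) (by norm_num))

/-- The enumerations `enum m` make the choices below canonical, hence measurable. -/
structure DyadicNets (Γ : Set X) where
  net : ℤ → Set X
  enum : ℤ → ℕ → X
  range_enum (m : ℤ) : range (enum m) = net m
  net_subset (m : ℤ) : net m ⊆ Γ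
  isSeparated (m : ℤ) : IsSeparated (dyadicScale m) (net m)
  isCover (m : ℤ) : IsCover (dyadicScale m) Γ (net m)

namespace DyadicNets

variable {Γ : Set X}

lemma nonempty [ProperSpace X] (hΓ : Γ.Nonempty) : Nonempty (DyadicNets Γ) := by
  choose N hNΓ hsep hcov using fun m => exists_isSeparated_isCover (dyadicScale m) Γ
  choose enum henum using fun m =>
    ((hsep m).countable (NNReal.coe_pos.1 (dyadicScale_pos m))).exists_eq_range
      ((hcov m).nonempty hΓ)
  exact ⟨⟨N, enum, fun m => (henum m).symm, hNΓ, hsep, hcov⟩⟩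

variable (𝒩 : DyadicNets Γ) {m j j' : ℤ} {p q x y z : X} {Q Q' : Set X}

lemma net_countable (m : ℤ) : (𝒩.net m).Countable := 𝒩.range_enum m ▸ countable_range _

lemma net_nonempty (m : ℤ) : (𝒩.net m).Nonempty := 𝒩.range_enum m ▸ range_nonempty _

lemma eq_of_dist_le (hx : x ∈ 𝒩.net m) (hy : y ∈ 𝒩.net m) (h : dist x y ≤ dyadicScale m) :
    x = y :=
  by_contra fun hxy => h.not_gt ((𝒩.isSeparated m).lt_dist hx hy hxy)

lemma exists_dist_le (hq : q ∈ Γ) (m : ℤ) : ∃ x ∈ 𝒩.net m, dist q x ≤ dyadicScale m := by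
  obtain ⟨x, hx, hqx⟩ := 𝒩.isCover m hq
  exact ⟨x, hx, by simpa [edist_dist] using hqx⟩

/-! ### Admissible branches -/

/-- Candidates for the center of the level-`m` cube containing `q`. -/
def adm (m : ℤ) (q : X) : Set X :=
  {z ∈ 𝒩.net m | dist q z ≤ 5 * dyadicScale m ∧
    ∀ x ∈ 𝒩.net m, dist q x < dyadicScale m / 8 → z = x}

lemma mem_adm_of_dist_lt (hx : x ∈ 𝒩.net m) (hqx : dist q x < dyadicScale m / 8) :
    x ∈ 𝒩.adm m q := by
  refine ⟨hx, by linarith [dyadicScale_pos m], fun y hy hqy => 𝒩.eq_of_dist_le hx hy ?_⟩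
  linarith [dist_triangle_left x y q]

lemma mem_adm_of_forall_le_dist (hz : z ∈ 𝒩.net m) (hqz : dist q z ≤ 5 * dyadicScale m)
    (hfar : ∀ x ∈ 𝒩.net m, dyadicScale m / 8 ≤ dist q x) : z ∈ 𝒩.adm m q :=
  ⟨hz, hqz, fun x hx hqx => absurd (hfar x hx) hqx.not_ge⟩

lemma adm_nonempty (hq : q ∈ Γ) (m : ℤ) : (𝒩.adm m q).Nonempty := by
  by_cases hnear : ∃ x ∈ 𝒩.net m, dist q x < dyadicScale m / 8
  · obtain ⟨x, hx, hqx⟩ := hnear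
    exact ⟨x, 𝒩.mem_adm_of_dist_lt hx hqx⟩
  · obtain ⟨x, hx, hqx⟩ := 𝒩.exists_dist_le hq m
    refine ⟨x, 𝒩.mem_adm_of_forall_le_dist hx (by linarith [dyadicScale_pos m]) ?_⟩
    simpa using hnear

lemma isClosed_setOf_mem_adm (m : ℤ) (z : X) : IsClosed {q | z ∈ 𝒩.adm m q} := by
  have : {q | z ∈ 𝒩.adm m q} = {_q | z ∈ 𝒩.net m} ∩ ({q | dist q z ≤ 5 * dyadicScale m} ∩
      ⋂ x ∈ 𝒩.net m, {q | dist q x < dyadicScale m / 8 → z = x}) := by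
    ext; simp [adm]; tauto
  rw [this]
  refine isClosed_const.inter ((isClosed_le (by fun_prop) continuous_const).inter
    (isClosed_biInter fun x _ => ?_))
  by_cases h : z = x
  · simp [h]
  · simpa [h] using isClosed_le continuous_const (continuous_id.dist continuous_const)

lemma measurable_mem_adm [MeasurableSpace X] [OpensMeasurableSpace X] (m : ℤ) (z : X) :
    Measurable fun q => z ∈ 𝒩.adm m q :=
  measurableSet_setOfPred.1 (𝒩.isClosed_setOf_mem_adm m z).measurableSet

variable [ProperSpace X]

lemma finite_adm (m : ℤ) (q : X) : (𝒩.adm m q).Finite :=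
  ((𝒩.isSeparated m).finite_inter_closedBall (NNReal.coe_pos.1 (dyadicScale_pos m)) q
    (5 * dyadicScale m)).subset fun _ hz => ⟨hz.1, mem_closedBall_comm.1 hz.2.1⟩

lemma exists_nearest (m : ℤ) (z : X) : ∃ y ∈ 𝒩.net m, ∀ x ∈ 𝒩.net m, dist z y ≤ dist z x := by
  obtain ⟨y, hy, hzy⟩ := ((𝒩.isSeparated m).isClosed (NNReal.coe_pos.1 (dyadicScale_pos m)))
    |>.exists_infDist_eq_dist (𝒩.net_nonempty m) z
  exact ⟨y, hy, fun x hx => hzy ▸ infDist_le_dist_of_mem hx⟩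

def parent (m : ℤ) (z : X) : X := (𝒩.exists_nearest m z).choose

lemma parent_mem (m : ℤ) (z : X) : 𝒩.parent m z ∈ 𝒩.net m := (𝒩.exists_nearest m z).choose_spec.1

lemma dist_parent_le (hx : x ∈ 𝒩.net m) : dist z (𝒩.parent m z) ≤ dist z x :=
  (𝒩.exists_nearest m z).choose_spec.2 x hx

lemma parent_eq (hx : x ∈ 𝒩.net m) (hzx : dist z x < dyadicScale m / 2) : 𝒩.parent m z = x := by
  refine 𝒩.eq_of_dist_le (𝒩.parent_mem m z) hx ?_
  linarith [dist_triangle_left (𝒩.parent m z) x z, 𝒩.dist_parent_le (z := z) hx]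

lemma dist_parent_le_dyadicScale (hz : z ∈ Γ) : dist z (𝒩.parent m z) ≤ dyadicScale m := by
  obtain ⟨x, hx, hzx⟩ := 𝒩.exists_dist_le hz m
  exact (𝒩.dist_parent_le hx).trans hzx

lemma parent_mem_adm (hz : z ∈ 𝒩.adm (m + 1) q) : 𝒩.parent m z ∈ 𝒩.adm m q := by
  have hqz : dist q z ≤ 5 * (dyadicScale m / 16) := dyadicScale_add_one m ▸ hz.2.1
  have := dyadicScale_pos m
  by_cases hnear : ∃ x ∈ 𝒩.net m, dist q x < dyadicScale m / 8
  · obtain ⟨x, hx, hqx⟩ := hnear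
    rw [𝒩.parent_eq hx (by linarith [dist_triangle_left z x q])]
    exact 𝒩.mem_adm_of_dist_lt hx hqx
  · refine 𝒩.mem_adm_of_forall_le_dist (𝒩.parent_mem m z) ?_ (by simpa using hnear)
    linarith [dist_triangle q z (𝒩.parent m z),
      𝒩.dist_parent_le_dyadicScale (m := m) (𝒩.net_subset _ hz.1)]

def HasAdmChain : ℕ → ℤ → X → X → Prop
  | 0, m, q, z => z ∈ 𝒩.adm m q
  | b + 1, m, q, z => z ∈ 𝒩.adm m q ∧
      ∃ i, 𝒩.parent m (𝒩.enum (m + 1) i) = z ∧ HasAdmChain b (m + 1) q (𝒩.enum (m + 1) i)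

def HasAdmChains (m : ℤ) (q z : X) : Prop := ∀ b, 𝒩.HasAdmChain b m q z

lemma HasAdmChain.mem_adm {𝒩 : DyadicNets Γ} {b : ℕ} (h : 𝒩.HasAdmChain b m q z) :
    z ∈ 𝒩.adm m q := by
  cases b with
  | zero => exact h
  | succ b => exact h.1

lemma HasAdmChain.mono {𝒩 : DyadicNets Γ} {b b' : ℕ} (h : 𝒩.HasAdmChain b m q z) (hb : b' ≤ b) :
    𝒩.HasAdmChain b' m q z := by
  induction b generalizing b' m z with
  | zero => exact Nat.le_zero.1 hb ▸ h
  | succ b ih =>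
    cases b' with
    | zero => exact h.mem_adm
    | succ b' =>
      obtain ⟨hz, i, hi, hchain⟩ := h
      exact ⟨hz, i, hi, ih hchain (by omega)⟩

lemma exists_hasAdmChain (hq : q ∈ Γ) (b : ℕ) (m : ℤ) : ∃ z, 𝒩.HasAdmChain b m q z := by
  induction b generalizing m with
  | zero => exact 𝒩.adm_nonempty hq m
  | succ b ih =>
    obtain ⟨z, hz⟩ := ih (m + 1)
    obtain ⟨i, rfl⟩ := (𝒩.range_enum (m + 1)).symm ▸ hz.mem_adm.1
    exact ⟨_, 𝒩.parent_mem_adm hz.mem_adm, i, rfl, hz⟩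

lemma exists_hasAdmChains (hq : q ∈ Γ) (m : ℤ) : ∃ z, 𝒩.HasAdmChains m q z := by
  obtain ⟨z, -, hz⟩ := (𝒩.finite_adm m q).exists_mem_forall_of_antitone
    (P := fun z b => 𝒩.HasAdmChain b m q z) (fun _ _ _ hb h => h.mono hb)
    fun b => (𝒩.exists_hasAdmChain hq b m).imp fun _ h => ⟨h.mem_adm, h⟩
  exact ⟨z, hz⟩

lemma HasAdmChains.exists_child {𝒩 : DyadicNets Γ} (h : 𝒩.HasAdmChains m q z) :
    ∃ i, 𝒩.parent m (𝒩.enum (m + 1) i) = z ∧ 𝒩.HasAdmChains (m + 1) q (𝒩.enum (m + 1) i) := by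
  obtain ⟨-, ⟨-, ⟨i, rfl⟩, hi⟩, hchains⟩ := ((𝒩.finite_adm (m + 1) q).inter_of_left
      {z' | z' ∈ range (𝒩.enum (m + 1)) ∧ 𝒩.parent m z' = z}).exists_mem_forall_of_antitone
    (P := fun z b => 𝒩.HasAdmChain b (m + 1) q z) (fun _ _ _ hb h => h.mono hb) fun b => by
      obtain ⟨-, i, hi, hchain⟩ := h (b + 1)
      exact ⟨_, ⟨hchain.mem_adm, mem_range_self i, hi⟩, hchain⟩
  exact ⟨i, hi, hchains⟩

/-- The branch of `q` at level `t ≥ 0`, as an index into `enum t` so that it is measurable in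
`q`. -/
def branchIdx (q : X) : ℕ → ℕ
  | 0 => sInf {i | 𝒩.HasAdmChains 0 q (𝒩.enum 0 i)}
  | t + 1 => sInf {i | 𝒩.parent t (𝒩.enum (t + 1) i) = 𝒩.enum t (branchIdx q t) ∧
      𝒩.HasAdmChains (t + 1) q (𝒩.enum (t + 1) i)}

/-- `ancestor j i z` is the level-`j` ancestor of a point `z` of level `j + i`. -/
def ancestor : ℤ → ℕ → X → X
  | _, 0, z => z
  | j, i + 1, z => 𝒩.parent j (ancestor (j + 1) i z)

def branch (q : X) (j : ℤ) : X :=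
  if 0 ≤ j then 𝒩.enum j (𝒩.branchIdx q j.toNat)
  else 𝒩.ancestor j (-j).toNat (𝒩.enum 0 (𝒩.branchIdx q 0))

lemma hasAdmChains_branchIdx (hq : q ∈ Γ) :
    ∀ t : ℕ, 𝒩.HasAdmChains t q (𝒩.enum t (𝒩.branchIdx q t))
  | 0 => Nat.sInf_mem <| by
      obtain ⟨z, hz⟩ := 𝒩.exists_hasAdmChains hq 0
      obtain ⟨i, rfl⟩ := (𝒩.range_enum 0).symm ▸ (hz 0).mem_adm.1
      exact ⟨i, hz⟩
  | t + 1 => by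
      push_cast
      exact (Nat.sInf_mem (hasAdmChains_branchIdx hq t).exists_child).2

lemma parent_branchIdx_succ (hq : q ∈ Γ) (t : ℕ) :
    𝒩.parent t (𝒩.enum (t + 1) (𝒩.branchIdx q (t + 1))) = 𝒩.enum t (𝒩.branchIdx q t) :=
  (Nat.sInf_mem (𝒩.hasAdmChains_branchIdx hq t).exists_child).1

lemma parent_branch (hq : q ∈ Γ) (j : ℤ) : 𝒩.parent j (𝒩.branch q (j + 1)) = 𝒩.branch q j := by
  rcases le_or_gt 0 j with hj | hj
  · lift j to ℕ using hj
    simp only [branch, Nat.cast_nonneg, if_true, Int.toNat_natCast]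
    rw [if_pos (by omega)]
    simpa [show (j + 1 : ℤ).toNat = j + 1 by omega] using 𝒩.parent_branchIdx_succ hq j
  · rcases eq_or_lt_of_le (show j + 1 ≤ 0 by omega) with hj1 | hj1
    · obtain rfl : j = -1 := by omega
      simp [branch, ancestor]
    · rw [branch, if_neg (by omega), branch, if_neg (by omega),
        show (-j).toNat = (-(j + 1)).toNat + 1 by omega]
      rfl

lemma branch_eq_ancestor (hq : q ∈ Γ) (j : ℤ) (i : ℕ) :
    𝒩.branch q j = 𝒩.ancestor j i (𝒩.branch q (j + i)) := by
  induction i generalizing j with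
  | zero => simp [ancestor]
  | succ i ih =>
    rw [ancestor, show j + ((i + 1 : ℕ) : ℤ) = j + 1 + i by push_cast; ring, ← ih,
      𝒩.parent_branch hq]

lemma ancestor_mem_net {i : ℕ} (hz : z ∈ 𝒩.net (j + i)) : 𝒩.ancestor j i z ∈ 𝒩.net j := by
  cases i with
  | zero => simpa [ancestor] using hz
  | succ i => exact 𝒩.parent_mem j _

lemma ancestor_mem_adm {i : ℕ} (hz : z ∈ 𝒩.adm (j + i) q) : 𝒩.ancestor j i z ∈ 𝒩.adm j q := by
  induction i generalizing j with
  | zero => simpa [ancestor] using hz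
  | succ i ih =>
    rw [show j + ((i + 1 : ℕ) : ℤ) = j + 1 + i by push_cast; ring] at hz
    exact 𝒩.parent_mem_adm (ih hz)

lemma branch_mem_adm (hq : q ∈ Γ) (j : ℤ) : 𝒩.branch q j ∈ 𝒩.adm j q := by
  have hnat (t : ℕ) : 𝒩.branch q t ∈ 𝒩.adm t q := by
    simpa [branch] using (𝒩.hasAdmChains_branchIdx hq t 0).mem_adm
  rcases le_or_gt 0 j with hj | hj
  · lift j to ℕ using hj
    exact hnat j
  · rw [𝒩.branch_eq_ancestor hq j (-j).toNat]
    exact 𝒩.ancestor_mem_adm (by rw [show j + ((-j).toNat : ℤ) = 0 by omega]; exact hnat 0)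

section measurability

variable [MeasurableSpace X] [OpensMeasurableSpace X]

lemma measurable_hasAdmChain (b : ℕ) : ∀ m z, Measurable fun q => 𝒩.HasAdmChain b m q z := by
  induction b with
  | zero => exact 𝒩.measurable_mem_adm
  | succ b ih =>
    exact fun m z => (𝒩.measurable_mem_adm m z).and
      (.exists fun i => measurable_const.and (ih _ _))

lemma measurable_branchIdx : ∀ t, Measurable fun q => 𝒩.branchIdx q t
  | 0 => measurable_sInf_setOf fun _ => .forall fun b => 𝒩.measurable_hasAdmChain b _ _
  | t + 1 => measurable_sInf_setOf fun i =>
      (measurable_from_nat (f := fun k => 𝒩.parent t (𝒩.enum (t + 1) i) = 𝒩.enum t k)).comp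
        (measurable_branchIdx t) |>.and (.forall fun b => 𝒩.measurable_hasAdmChain b _ _)

lemma measurable_branch (j : ℤ) : Measurable fun q => 𝒩.branch q j := by
  unfold branch
  split_ifs
  · exact measurable_from_nat.comp (𝒩.measurable_branchIdx _)
  · exact (measurable_from_nat (f := fun k => 𝒩.ancestor j (-j).toNat (𝒩.enum 0 k))).comp
      (𝒩.measurable_branchIdx 0)

end measurability

/-! ### Cubes -/

def cube (j : ℤ) (x : X) : Set X := {q ∈ Γ | 𝒩.branch q j = x}

def cubes (j : ℤ) : Set (Set X) := 𝒩.cube j '' 𝒩.net j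

lemma cube_subset : 𝒩.cube j x ⊆ Γ := fun _ hq => hq.1

lemma dist_le_of_mem_cube (hq : q ∈ 𝒩.cube j x) : dist q x ≤ 5 * dyadicScale j :=
  hq.2 ▸ (𝒩.branch_mem_adm hq.1 j).2.1

lemma ball_inter_subset_cube (hx : x ∈ 𝒩.net j) : ball x (dyadicScale j / 8) ∩ Γ ⊆ 𝒩.cube j x :=
  fun _ ⟨hqx, hq⟩ => ⟨hq, (𝒩.branch_mem_adm hq j).2.2 x hx hqx⟩

lemma mem_cube_self (hx : x ∈ 𝒩.net j) : x ∈ 𝒩.cube j x :=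
  𝒩.ball_inter_subset_cube hx ⟨mem_ball_self (by linarith [dyadicScale_pos j]), 𝒩.net_subset j hx⟩

lemma cube_subset_cube_ancestor (i : ℕ) (y : X) :
    𝒩.cube (j + i) y ⊆ 𝒩.cube j (𝒩.ancestor j i y) :=
  fun _ hq => ⟨hq.1, by rw [𝒩.branch_eq_ancestor hq.1 j i, hq.2]⟩

lemma disjoint_cube (hxy : x ≠ y) : Disjoint (𝒩.cube j x) (𝒩.cube j y) :=
  disjoint_left.2 fun _ hx hy => hxy (hx.2.symm.trans hy.2)

lemma cube_subset_or_disjoint (hjj' : j ≤ j') (y x : X) :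
    𝒩.cube j' y ⊆ 𝒩.cube j x ∨ Disjoint (𝒩.cube j' y) (𝒩.cube j x) := by
  obtain ⟨i, rfl⟩ : ∃ i : ℕ, j' = j + i := ⟨(j' - j).toNat, by omega⟩
  by_cases h : 𝒩.ancestor j i y = x
  · exact .inl (h ▸ 𝒩.cube_subset_cube_ancestor i y)
  · exact .inr ((𝒩.disjoint_cube h).mono_left (𝒩.cube_subset_cube_ancestor i y))

lemma diff_cube_nonempty (hΓ : ¬ IsBounded Γ) (j : ℤ) (x : X) : (Γ \ 𝒩.cube j x).Nonempty :=
  sdiff_nonempty.2 fun h => hΓ <| (isBounded_closedBall (x := x) (r := 5 * dyadicScale j)).subset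
    (h.trans fun _ hq => mem_closedBall.2 (𝒩.dist_le_of_mem_cube hq))

lemma measurableSet_cube [MeasurableSpace X] [OpensMeasurableSpace X] (hΓ : MeasurableSet Γ)
    (j : ℤ) (x : X) : MeasurableSet (𝒩.cube j x) :=
  hΓ.inter (𝒩.measurable_branch j (measurableSet_singleton x))

lemma subset_of_mem_cubes (hQ : Q ∈ 𝒩.cubes j) : Q ⊆ Γ := by
  obtain ⟨x, -, rfl⟩ := hQ
  exact 𝒩.cube_subset

lemma measurableSet_of_mem_cubes [MeasurableSpace X] [OpensMeasurableSpace X]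
    (hΓ : MeasurableSet Γ) (hQ : Q ∈ 𝒩.cubes j) : MeasurableSet Q := by
  obtain ⟨x, -, rfl⟩ := hQ
  exact 𝒩.measurableSet_cube hΓ j x

lemma countable_cubes (j : ℤ) : (𝒩.cubes j).Countable := (𝒩.net_countable j).image _

lemma sUnion_cubes (j : ℤ) : ⋃₀ 𝒩.cubes j = Γ := by
  refine subset_antisymm (sUnion_subset ?_) fun q hq => ?_
  · rintro _ ⟨x, -, rfl⟩
    exact 𝒩.cube_subset
  · exact ⟨_, mem_image_of_mem _ (𝒩.branch_mem_adm hq j).1, hq, rfl⟩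

lemma subset_or_inter_eq_empty_of_mem_cubes (hjj' : j ≤ j') (hQ : Q ∈ 𝒩.cubes j')
    (hQ' : Q' ∈ 𝒩.cubes j) : Q ⊆ Q' ∨ Q ∩ Q' = ∅ := by
  obtain ⟨y, -, rfl⟩ := hQ
  obtain ⟨x, -, rfl⟩ := hQ'
  exact (𝒩.cube_subset_or_disjoint hjj' y x).imp_right disjoint_iff_inter_eq_empty.1

lemma existsUnique_subset_of_mem_cubes (hjj' : j ≤ j') (hQ : Q ∈ 𝒩.cubes j') :
    ∃! Q', Q' ∈ 𝒩.cubes j ∧ Q ⊆ Q' := by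
  obtain ⟨y, hy, rfl⟩ := hQ
  obtain ⟨i, rfl⟩ : ∃ i : ℕ, j' = j + i := ⟨(j' - j).toNat, by omega⟩
  refine ⟨_, ⟨mem_image_of_mem _ (𝒩.ancestor_mem_net hy), 𝒩.cube_subset_cube_ancestor i y⟩, ?_⟩
  rintro _ ⟨⟨x, -, rfl⟩, hsub⟩
  exact congrArg _ ((hsub (𝒩.mem_cube_self hy)).2.symm.trans
    (𝒩.cube_subset_cube_ancestor i y (𝒩.mem_cube_self hy)).2)

lemma ediam_le_of_mem_cubes (hQ : Q ∈ 𝒩.cubes j) :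
    ediam Q ≤ ENNReal.ofReal (10 * dyadicScale j) := by
  obtain ⟨x, -, rfl⟩ := hQ
  exact ediam_le_of_forall_dist_le fun p hp q hq => by
    linarith [dist_triangle_right p q x, 𝒩.dist_le_of_mem_cube hp, 𝒩.dist_le_of_mem_cube hq]

lemma exists_ball_subset_of_mem_cubes (hQ : Q ∈ 𝒩.cubes j) :
    ∃ x ∈ Γ, ball x (dyadicScale j / 8) ∩ Γ ⊆ Q := by
  obtain ⟨x, hx, rfl⟩ := hQ
  exact ⟨x, 𝒩.net_subset j hx, 𝒩.ball_inter_subset_cube hx⟩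

/-! ### Boundary layers -/

lemma cube_subset_boundaryLayer {w : ℝ} (hyQ : 𝒩.cube m y ⊆ Q)
    (hp : p ∈ 𝒩.cube m y ∩ boundaryLayer Γ Q w) :
    𝒩.cube m y ⊆ boundaryLayer Γ Q (w + 10 * dyadicScale m) :=
  fun q hq => ⟨hyQ hq, by linarith [infDist_le_infDist_add_dist (x := q) (y := p) (s := Γ \ Q),
    hp.2.2, dist_triangle_right q p y, 𝒩.dist_le_of_mem_cube hq, 𝒩.dist_le_of_mem_cube hp.1]⟩

section measure

variable [MeasurableSpace X] [OpensMeasurableSpace X] (hΓ : MeasurableSet Γ) {μ : Measure X}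
include hΓ

lemma measure_eq_tsum_cube_inter {A : Set X} (hA : MeasurableSet A) (hAΓ : A ⊆ Γ) (m : ℤ) :
    μ A = ∑' y : 𝒩.net m, μ (𝒩.cube m y ∩ A) := by
  have hA_eq : A = ⋃ y ∈ 𝒩.net m, 𝒩.cube m y ∩ A :=
    subset_antisymm (fun q hq => mem_biUnion (𝒩.branch_mem_adm (hAΓ hq) m).1
      (⟨⟨hAΓ hq, rfl⟩, hq⟩ : q ∈ 𝒩.cube m _ ∩ A))
      (iUnion₂_subset fun _ _ => inter_subset_right)
  conv_lhs => rw [hA_eq]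
  exact measure_biUnion (𝒩.net_countable m)
    (fun _ _ _ _ h => (𝒩.disjoint_cube h).mono inter_subset_left inter_subset_left)
    fun y _ => (𝒩.measurableSet_cube hΓ m y).inter hA

variable {c : ℝ} (hc₀ : 0 ≤ c)
  (hdoubling : ∀ y ∈ Γ, ∀ r > 0, ENNReal.ofReal c * μ (ball y (96 * r) ∩ Γ) ≤ μ (ball y r ∩ Γ))
  (hfinite : ∀ y ∈ Γ, ∀ r > 0, μ (ball y r ∩ Γ) ≠ ∞)
include hc₀ hdoubling hfinite

/-- The inner ball of the cube, which carries the proportion `c` of its mass, misses the layer. -/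
lemma measure_cube_inter_boundaryLayer_le (hc₁ : c ≤ 1) {w : ℝ} (hy : y ∈ 𝒩.net m)
    (hyQ : 𝒩.cube m y ⊆ Q) (hQ : (Γ \ Q).Nonempty) (hw : w < dyadicScale m / 16) :
    μ (𝒩.cube m y ∩ boundaryLayer Γ Q w) ≤ ENNReal.ofReal (1 - c) * μ (𝒩.cube m y) := by
  have hs := dyadicScale_pos m
  have hball : ball y (dyadicScale m / 16) ∩ Γ ⊆ 𝒩.cube m y :=
    (inter_subset_inter_left _ (ball_subset_ball (by linarith))).trans
      (𝒩.ball_inter_subset_cube hy)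
  have hcube : 𝒩.cube m y ⊆ ball y (96 * (dyadicScale m / 16)) ∩ Γ :=
    fun q hq => ⟨mem_ball.2 (by linarith [𝒩.dist_le_of_mem_cube hq]), hq.1⟩
  have hdisj :
      Disjoint (𝒩.cube m y ∩ boundaryLayer Γ Q w) (ball y (dyadicScale m / 16) ∩ Γ) := by
    refine disjoint_left.2 fun p hp hpy => hp.2.2.not_gt (hw.trans_le ((le_infDist hQ).2 ?_))
    intro z hz
    have : dyadicScale m / 8 ≤ dist z y :=
      not_lt.1 fun h => hz.2 (hyQ (𝒩.ball_inter_subset_cube hy ⟨h, hz.1⟩))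
    linarith [dist_triangle_left z y p, mem_ball.1 hpy.1]
  refine ENNReal.le_ofReal_one_sub_mul hc₀ hc₁ (ne_top_of_le_ne_top
    (hfinite y (𝒩.net_subset m hy) _ (by positivity)) (measure_mono hcube)) ?_
  calc μ (𝒩.cube m y ∩ boundaryLayer Γ Q w) + ENNReal.ofReal c * μ (𝒩.cube m y)
    _ ≤ μ (𝒩.cube m y ∩ boundaryLayer Γ Q w) + μ (ball y (dyadicScale m / 16) ∩ Γ) := by
        gcongr
        exact le_trans (by gcongr) (hdoubling y (𝒩.net_subset m hy) _ (by positivity))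
    _ = μ (𝒩.cube m y ∩ boundaryLayer Γ Q w ∪ ball y (dyadicScale m / 16) ∩ Γ) :=
        (measure_union hdisj (measurableSet_ball.inter hΓ)).symm
    _ ≤ μ (𝒩.cube m y) := measure_mono (union_subset inter_subset_left hball)

lemma measure_cube_inter_boundaryLayer_add_two_le (hc₁ : c ≤ 1) (hΓb : ¬ IsBounded Γ)
    (hjm : j ≤ m) (hy : y ∈ 𝒩.net m) :
    μ (𝒩.cube m y ∩ boundaryLayer Γ (𝒩.cube j x) (12 * dyadicScale (m + 2))) ≤
      ENNReal.ofReal (1 - c) *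
        μ (𝒩.cube m y ∩ boundaryLayer Γ (𝒩.cube j x) (12 * dyadicScale m)) := by
  have hs := dyadicScale_pos m
  rcases (𝒩.cube m y ∩ boundaryLayer Γ (𝒩.cube j x) (12 * dyadicScale (m + 2))).eq_empty_or_nonempty
    with h | ⟨p, hp⟩
  · simp [h]
  have hyQ : 𝒩.cube m y ⊆ 𝒩.cube j x := (𝒩.cube_subset_or_disjoint hjm y x).resolve_right
    (not_disjoint_iff.2 ⟨p, hp.1, hp.2.1⟩)
  have hyL : 𝒩.cube m y ⊆ boundaryLayer Γ (𝒩.cube j x) (12 * dyadicScale m) :=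
    (𝒩.cube_subset_boundaryLayer hyQ hp).trans
      (boundaryLayer_mono (by rw [dyadicScale_add_two]; linarith))
  rw [inter_eq_left.2 hyL]
  refine 𝒩.measure_cube_inter_boundaryLayer_le hΓ hc₀ hdoubling hfinite hc₁ hy hyQ
    (𝒩.diff_cube_nonempty hΓb j x) ?_
  rw [dyadicScale_add_two]; linarith

lemma measure_boundaryLayer_cube_add_two_le (hc₁ : c ≤ 1) (hΓb : ¬ IsBounded Γ) (hjm : j ≤ m) :
    μ (boundaryLayer Γ (𝒩.cube j x) (12 * dyadicScale (m + 2))) ≤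
      ENNReal.ofReal (1 - c) * μ (boundaryLayer Γ (𝒩.cube j x) (12 * dyadicScale m)) := by
  have hQ := 𝒩.measurableSet_cube hΓ j x
  rw [𝒩.measure_eq_tsum_cube_inter hΓ (hQ.boundaryLayer _) ((sep_subset _ _).trans 𝒩.cube_subset),
    𝒩.measure_eq_tsum_cube_inter hΓ (hQ.boundaryLayer _) ((sep_subset _ _).trans 𝒩.cube_subset),
    ← ENNReal.tsum_mul_left]
  exact ENNReal.tsum_le_tsum fun y =>
    𝒩.measure_cube_inter_boundaryLayer_add_two_le hΓ hc₀ hdoubling hfinite hc₁ hΓb hjm y.2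

lemma measure_boundaryLayer_cube_le_pow (hc₁ : c ≤ 1) (hΓb : ¬ IsBounded Γ) (x : X) (t : ℕ) :
    μ (boundaryLayer Γ (𝒩.cube j x) (12 * dyadicScale (j + 2 * t))) ≤
      ENNReal.ofReal (1 - c) ^ t * μ (𝒩.cube j x) := by
  induction t with
  | zero =>
    rw [pow_zero, one_mul]
    exact measure_mono (sep_subset _ _)
  | succ t ih =>
    calc _ = μ (boundaryLayer Γ (𝒩.cube j x) (12 * dyadicScale (j + 2 * t + 2))) := by
          push_cast; ring_nf
      _ ≤ _ := 𝒩.measure_boundaryLayer_cube_add_two_le hΓ hc₀ hdoubling hfinite hc₁ hΓb (by omega)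
      _ ≤ _ := by rw [pow_succ', mul_assoc]; gcongr

lemma measure_boundaryLayer_cube_le_rpow (hc₁ : c < 1) (hΓb : ¬ IsBounded Γ) (j : ℤ) (x : X)
    {ρ : ℝ} (hρ₀ : 0 < ρ) (hρ₁ : ρ ≤ 1) :
    μ (boundaryLayer Γ (𝒩.cube j x) (12 * dyadicScale j * ρ)) ≤
      ENNReal.ofReal ((1 - c)⁻¹ * ρ ^ decayExponent c) * μ (𝒩.cube j x) := by
  refine ENNReal.le_ofReal_rpow_mul_of_le_pow
    (f := fun w => μ (boundaryLayer Γ (𝒩.cube j x) (12 * dyadicScale j * w)))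
    (fun _ _ h => measure_mono (boundaryLayer_mono
      (mul_le_mul_of_nonneg_left h (by linarith [dyadicScale_pos j])))) (by norm_num) (by norm_num)
    (by linarith) (by linarith) (fun t => ?_) hρ₀ hρ₁
  have hw : 12 * dyadicScale j * (256 : ℝ)⁻¹ ^ t = 12 * dyadicScale (j + 2 * t) := by
    rw [dyadicScale_add, zpow_neg, zpow_mul, zpow_natCast, inv_pow]
    norm_num
    ring
  rw [hw, ENNReal.ofReal_pow (by linarith)]
  exact 𝒩.measure_boundaryLayer_cube_le_pow hΓ hc₀ hdoubling hfinite hc₁.le hΓb x t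

end measure

/-- Generation `k` consists of the cubes of level `⌈k / 4⌉`, since `16⁻ᵐ = 2⁻⁴ᵐ`. -/
def generation (k : ℤ) : Set (Set X) := 𝒩.cubes ((k + 3) / 4)

lemma ediam_le_of_mem_generation {k : ℤ} (hQ : Q ∈ 𝒩.generation k) :
    ediam Q ≤ ENNReal.ofReal (10 * 2 ^ (-k)) :=
  (𝒩.ediam_le_of_mem_cubes hQ).trans
    (ENNReal.ofReal_le_ofReal (by linarith [dyadicScale_le_two_zpow k]))

lemma exists_ball_subset_of_mem_generation {k : ℤ} (hQ : Q ∈ 𝒩.generation k) :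
    ∃ x ∈ Γ, ball x (1 / 64 * 2 ^ (-k)) ∩ Γ ⊆ Q := by
  obtain ⟨x, hx, hxQ⟩ := 𝒩.exists_ball_subset_of_mem_cubes hQ
  exact ⟨x, hx, (inter_subset_inter_left _
    (ball_subset_ball (by linarith [two_zpow_le_dyadicScale k]))).trans hxQ⟩

lemma measure_boundaryLayer_le_of_mem_generation [MeasurableSpace X] [OpensMeasurableSpace X]
    (hΓ : MeasurableSet Γ) {μ : Measure X} {c : ℝ} (hc₀ : 0 ≤ c) (hc₁ : c ≤ 1 / 2)
    (hdoubling : ∀ y ∈ Γ, ∀ r > 0, ENNReal.ofReal c * μ (ball y (96 * r) ∩ Γ) ≤ μ (ball y r ∩ Γ))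
    (hfinite : ∀ y ∈ Γ, ∀ r > 0, μ (ball y r ∩ Γ) ≠ ∞) (hΓb : ¬ IsBounded Γ) {k : ℤ} (hQ : Q ∈ 𝒩.generation k) {ρ : ℝ} (hρ₀ : 0 < ρ)
    (hρ₁ : ρ ≤ 1) :
    μ (boundaryLayer Γ Q (ρ * 2 ^ (-k))) ≤ ENNReal.ofReal (2 * ρ ^ decayExponent c) * μ Q := by
  obtain ⟨x, -, rfl⟩ := hQ
  have hγ := decayExponent_nonneg hc₀ (by linarith)
  calc _ ≤ μ (boundaryLayer Γ (𝒩.cube _ x) (12 * dyadicScale ((k + 3) / 4) * (2 * ρ / 3))) :=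
        measure_mono (boundaryLayer_mono (by nlinarith [two_zpow_le_dyadicScale k]))
    _ ≤ _ := 𝒩.measure_boundaryLayer_cube_le_rpow hΓ hc₀ hdoubling hfinite (by linarith) hΓb _ x
        (by positivity) (by linarith)
    _ ≤ _ := by
        gcongr
        · rw [inv_le_comm₀ (by linarith) two_pos]
          linarith
        · linarith

end DyadicNets

/-! ### Ahlfors regular sets -/

/-- `C₀⁻¹ rᵈ / (C₀ (96 r)ᵈ)`, the ratio of the Ahlfors bounds on balls of radii `r` and `96 r`. -/
def ahlforsDoublingConst (d : ℕ) (C₀ : ℝ) : ℝ := (C₀ ^ 2 * 96 ^ d)⁻¹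

lemma ahlforsDoublingConst_pos {d : ℕ} {C₀ : ℝ} (hC₀ : 0 < C₀) :
    0 < ahlforsDoublingConst d C₀ := by
  unfold ahlforsDoublingConst; positivity

lemma ahlforsDoublingConst_le_half {d : ℕ} {C₀ : ℝ} (hd : 1 ≤ d) (hC₀ : 1 ≤ C₀) :
    ahlforsDoublingConst d C₀ ≤ 1 / 2 := by
  unfold ahlforsDoublingConst
  rw [one_div, inv_le_inv₀ (by positivity) two_pos]
  nlinarith [one_le_pow₀ (M₀ := ℝ) (by linarith : (1 : ℝ) ≤ C₀) (n := 2),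
    le_self_pow₀ (by norm_num : (1 : ℝ) ≤ 96) (by omega : d ≠ 0)]

namespace AhlforsRegular

variable {n d : ℕ} {C₀ : ℝ} {Γ : Set (Pt n)} (hΓ : AhlforsRegular n d C₀ Γ)
include hΓ

lemma measure_ne_top {y : Pt n} (hy : y ∈ Γ) {r : ℝ} (hr : 0 < r) :
    μH[(d : ℝ)] (ball y r ∩ Γ) ≠ ∞ :=
  ne_top_of_le_ne_top ENNReal.ofReal_ne_top (hΓ y hy r hr).2

lemma doubling (hC₀ : 0 < C₀) {y : Pt n} (hy : y ∈ Γ) {r : ℝ} (hr : 0 < r) :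
    ENNReal.ofReal (ahlforsDoublingConst d C₀) * μH[(d : ℝ)] (ball y (96 * r) ∩ Γ) ≤
      μH[(d : ℝ)] (ball y r ∩ Γ) :=
  calc _ ≤ ENNReal.ofReal (ahlforsDoublingConst d C₀) * ENNReal.ofReal (C₀ * (96 * r) ^ d) := by
        gcongr; exact (hΓ y hy _ (by positivity)).2
    _ = ENNReal.ofReal (C₀⁻¹ * r ^ d) := by
        rw [← ENNReal.ofReal_mul (ahlforsDoublingConst_pos hC₀).le, ahlforsDoublingConst]
        congr 1
        field_simp
        ring
    _ ≤ _ := (hΓ y hy r hr).1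

lemma not_isBounded (hd : 1 ≤ d) (hC₀ : 0 < C₀) (hne : Γ.Nonempty) : ¬ IsBounded Γ := by
  intro hb
  obtain ⟨q, hq⟩ := hne
  obtain ⟨r, hr⟩ := hb.subset_ball q
  have hr₀ : 0 < r := pos_of_mem_ball (hr hq)
  set R := C₀ ^ 2 * r ^ d + 1
  have hR : 1 ≤ R := le_add_of_nonneg_left (by positivity)
  have hΓr : μH[(d : ℝ)] Γ ≤ ENNReal.ofReal (C₀ * r ^ d) := by
    simpa [inter_eq_right.2 hr] using (hΓ q hq r hr₀).2
  have hle := (hΓ q hq R (by linarith)).1.trans ((measure_mono inter_subset_right).trans hΓr)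
  rw [ENNReal.ofReal_le_ofReal_iff (by positivity)] at hle
  have hRd : R ≤ R ^ d := le_self_pow₀ hR (by omega)
  have : R ^ d ≤ C₀ ^ 2 * r ^ d := by
    have := mul_le_mul_of_nonneg_left hle hC₀.le
    rwa [← mul_assoc, mul_inv_cancel₀ hC₀.ne', one_mul, ← mul_assoc, ← sq] at this
  linarith

end AhlforsRegular

theorem dyadic_cubes_general (n d : ℕ) (C₀ : ℝ)
    (hd : 1 ≤ d) (hC₀ : 1 ≤ C₀) :
    ∃ a₀ A₁ γ : ℝ, 0 < a₀ ∧ 0 < A₁ ∧ 0 < γ ∧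
      ∀ Γ : Set (Pt n), IsClosed Γ → Γ.Nonempty → AhlforsRegular n d C₀ Γ →
        ∃ 𝔻 : ℤ → Set (Set (Pt n)),
          (∀ k, (𝔻 k).Countable) ∧
          (∀ k, ∀ Q ∈ 𝔻 k, MeasurableSet Q ∧ Q ⊆ Γ) ∧
          -- (i) each generation covers Γ
          (∀ k, ⋃₀ 𝔻 k = Γ) ∧
          -- (ii) a cube of a later generation is contained in, or disjoint from,
          -- each cube of an earlier generation
          (∀ k m : ℤ, k ≤ m → ∀ Q ∈ 𝔻 m, ∀ Q' ∈ 𝔻 k, Q ⊆ Q' ∨ Q ∩ Q' = ∅) ∧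
          -- (iii) unique ancestor in each earlier generation
          (∀ k, ∀ Q ∈ 𝔻 k, ∀ m : ℤ, m < k → ∃! Q' : Set (Pt n), Q' ∈ 𝔻 m ∧ Q ⊆ Q') ∧
          -- (iv) diameter bound
          (∀ k, ∀ Q ∈ 𝔻 k, EMetric.diam Q ≤ ENNReal.ofReal (A₁ * 2 ^ (-k))) ∧
          -- (v) each cube contains a surface ball
          (∀ k, ∀ Q ∈ 𝔻 k, ∃ x ∈ Γ, ball x (a₀ * 2 ^ (-k)) ∩ Γ ⊆ Q) ∧
          -- (vi) small boundary layers
          (∀ k, ∀ Q ∈ 𝔻 k, ∀ ρ : ℝ, 0 < ρ → ρ < a₀ →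
            μH[(d : ℝ)] {p ∈ Q | infDist p (Γ \ Q) ≤ ρ * 2 ^ (-k)} ≤
              ENNReal.ofReal (A₁ * ρ ^ γ) * μH[(d : ℝ)] Q) := by
  have hC₀' : 0 < C₀ := by linarith
  have hc₀ := ahlforsDoublingConst_pos (d := d) hC₀'
  have hc₁ := ahlforsDoublingConst_le_half hd hC₀
  refine ⟨1 / 64, 10, decayExponent (ahlforsDoublingConst d C₀), by norm_num, by norm_num,
    decayExponent_pos hc₀ (by linarith), fun Γ hΓ hne hAR => ?_⟩
  obtain ⟨𝒩⟩ := DyadicNets.nonempty hne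
  refine ⟨𝒩.generation, fun k => 𝒩.countable_cubes _,
    fun k Q hQ => ⟨𝒩.measurableSet_of_mem_cubes hΓ.measurableSet hQ, 𝒩.subset_of_mem_cubes hQ⟩,
    fun k => 𝒩.sUnion_cubes _,
    fun k m hkm Q hQ Q' hQ' => 𝒩.subset_or_inter_eq_empty_of_mem_cubes (by omega) hQ hQ',
    fun k Q hQ m hmk => 𝒩.existsUnique_subset_of_mem_cubes (by omega) hQ,
    fun k Q hQ => 𝒩.ediam_le_of_mem_generation hQ,
    fun k Q hQ => 𝒩.exists_ball_subset_of_mem_generation hQ,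
    fun k Q hQ ρ hρ₀ hρ => ?_⟩
  calc _ ≤ _ := 𝒩.measure_boundaryLayer_le_of_mem_generation hΓ.measurableSet hc₀.le hc₁
        (fun y hy r hr => hAR.doubling hC₀' hy hr) (fun y hy r hr => hAR.measure_ne_top hy hr)
        (hAR.not_isBounded hd hC₀' hne) hQ hρ₀ (by linarith)
    _ ≤ _ := by gcongr; norm_num

/-- Existence of a dyadic decomposition of an Ahlfors regular set (David, Christ):
there are constants `a₀, A₁, γ > 0`, depending only on `d, n, C₀`, such that each
generation `𝔻 k` (`k ∈ ℤ`) is a countable family of Borel subsets of `Γ` covering `Γ`,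
nested between generations, of diameter at most `A₁ 2^{-k}`, each containing a surface
ball of radius `a₀ 2^{-k}`, and with small boundary layers. -/
theorem dyadic_cubes (n d : ℕ) (C₀ : ℝ)
    (hd : 1 ≤ d) (hdn : d ≤ n) (hC₀ : 1 ≤ C₀) :
    ∃ a₀ A₁ γ : ℝ, 0 < a₀ ∧ 0 < A₁ ∧ 0 < γ ∧
      ∀ Γ : Set (Pt n), IsClosed Γ → Γ.Nonempty → AhlforsRegular n d C₀ Γ →
        ∃ 𝔻 : ℤ → Set (Set (Pt n)),
          (∀ k, (𝔻 k).Countable) ∧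
          (∀ k, ∀ Q ∈ 𝔻 k, MeasurableSet Q ∧ Q ⊆ Γ) ∧
          -- (i) each generation covers Γ
          (∀ k, ⋃₀ 𝔻 k = Γ) ∧
          -- (ii) a cube of a later generation is contained in, or disjoint from,
          -- each cube of an earlier generation
          (∀ k m : ℤ, k ≤ m → ∀ Q ∈ 𝔻 m, ∀ Q' ∈ 𝔻 k, Q ⊆ Q' ∨ Q ∩ Q' = ∅) ∧
          -- (iii) unique ancestor in each earlier generation
          (∀ k, ∀ Q ∈ 𝔻 k, ∀ m : ℤ, m < k → ∃! Q' : Set (Pt n), Q' ∈ 𝔻 m ∧ Q ⊆ Q') ∧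
          -- (iv) diameter bound
          (∀ k, ∀ Q ∈ 𝔻 k, EMetric.diam Q ≤ ENNReal.ofReal (A₁ * 2 ^ (-k))) ∧
          -- (v) each cube contains a surface ball
          (∀ k, ∀ Q ∈ 𝔻 k, ∃ x ∈ Γ, ball x (a₀ * 2 ^ (-k)) ∩ Γ ⊆ Q) ∧
          -- (vi) small boundary layers
          (∀ k, ∀ Q ∈ 𝔻 k, ∀ ρ : ℝ, 0 < ρ → ρ < a₀ →
            μH[(d : ℝ)] {p ∈ Q | infDist p (Γ \ Q) ≤ ρ * 2 ^ (-k)} ≤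
              ENNReal.ofReal (A₁ * ρ ^ γ) * μH[(d : ℝ)] Q) :=
  dyadic_cubes_general n d C₀ hd hC₀
end
end

section
/- Let n, d be integers with 1 ≤ d < n−1, Γ ⊂ ℝⁿ a closed d-Ahlfors regular set with constant C₀, and α > 0. Then there exist constants c, C > 0, depending only on n, d, C₀, α, such that for every measurable function h : Ω → [0, ∞], every q₀ ∈ Γ and every r > 0: (upper bound) ∫_{B(q₀,r) ∩ Ω} h(X) δ(X)^{d−n+2} dX ≤ C ∫_{B(q₀,(α+2)r) ∩ Γ} ( ∫_{Γ^α(q) ∩ B(q,(α+1)r)} h(X) δ(X)^{2−n} dX ) dσ(q), and (lower bound) ∫_{B(q₀,r) ∩ Ω} h(X) δ(X)^{d−n+2} dX ≥ c ∫_{B(q₀,r/2) ∩ Γ} ( ∫_{Γ^α(q) ∩ B(q,r/2)} h(X) δ(X)^{2−n} dX ) dσ(q). Here the inner integrals are with respect to Lebesgue measure on ℝⁿ and the outer integrals with respect to σ = H^d restricted to Γ. -/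
open MeasureTheory Metric Set
open scoped ENNReal NNReal Topology

noncomputable section

/-- The nontangential cone `Γ^α(q) = {X ∈ Ω : |X - q| < (1+α)δ(X)}`. -/
def NTCone (n : ℕ) (Γ : Set (Pt n)) (α : ℝ) (q : Pt n) : Set (Pt n) :=
  {X | X ∉ Γ ∧ dist X q < (1 + α) * infDist X Γ}

/-! The square-function side is turned around by Tonelli: it equals
`∫ h δ^{2-n} σ(S(X)) dX`, where the shadow `S(X)` is the set of boundary points whose truncated
cone contains `X`. If `z ∈ Γ` is a point nearest to `X`, the shadow contains `Γ ∩ B(z, α δ(X))`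
(once the truncation height is at least `(1 + α) δ(X)`) and lies in `B(z, (2 + α) δ(X))`, so
Ahlfors regularity gives `σ(S(X)) ≈ δ(X)^d`, which turns the weight `δ^{2-n}` into `δ^{d-n+2}`. -/

theorem lintegral_setLIntegral_eq_lintegral_mul_measure {E F : Type*} [MeasurableSpace E]
    [MeasurableSpace F] {μ : Measure E} {ν : Measure F} [SFinite μ] [SFinite ν]
    {T : E → Set F} (hT : MeasurableSet {p : E × F | p.2 ∈ T p.1})
    {f : F → ℝ≥0∞} (hf : Measurable f) :
    ∫⁻ x, ∫⁻ y in T x, f y ∂ν ∂μ = ∫⁻ y, f y * μ {x | y ∈ T x} ∂ν := by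
  simp_rw [← withDensity_apply' f]
  calc ∫⁻ x, ν.withDensity f (T x) ∂μ = μ.prod (ν.withDensity f) {p | p.2 ∈ T p.1} :=
        (Measure.prod_apply hT).symm
    _ = ∫⁻ y, μ {x | y ∈ T x} ∂ν.withDensity f := Measure.prod_apply_symm hT
    _ = _ := lintegral_withDensity_eq_lintegral_mul _ hf (measurable_measure_prodMk_right hT)

theorem ofReal_rpow_natCast_sub_add_two {x : ℝ} (hx : 0 < x) (d n : ℕ) :
    ENNReal.ofReal (x ^ ((d : ℝ) - n + 2)) =
      ENNReal.ofReal (x ^ ((2 : ℝ) - n)) * ENNReal.ofReal (x ^ d) := by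
  rw [← ENNReal.ofReal_mul (Real.rpow_nonneg hx.le _), ← Real.rpow_natCast,
    ← Real.rpow_add hx]
  ring_nf

section

variable {n d : ℕ} {C₀ α : ℝ} {Γ : Set (Pt n)}

theorem isOpen_setOf_mem_ntCone_inter_ball (hΓ : IsClosed Γ) (α ρ : ℝ) :
    IsOpen {p : Pt n × Pt n | p.2 ∈ NTCone n Γ α p.1 ∩ ball p.1 ρ} := by
  have hδ : Continuous fun p : Pt n × Pt n => infDist p.2 Γ :=
    (continuous_infDist_pt Γ).comp continuous_snd
  exact ((hΓ.isOpen_compl.preimage continuous_snd).inter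
    (isOpen_lt (by fun_prop) (continuous_const.mul hδ))).inter
    (isOpen_lt (by fun_prop) (by fun_prop))

theorem ball_subset_setOf_mem_ntCone_inter_ball {X z : Pt n} {ρ : ℝ} (hX : X ∉ Γ)
    (hz : dist X z = infDist X Γ) (hρ : (1 + α) * infDist X Γ ≤ ρ) :
    ball z (α * infDist X Γ) ⊆ {q | X ∈ NTCone n Γ α q ∩ ball q ρ} := by
  intro q hq
  have hXq : dist X q < (1 + α) * infDist X Γ := by
    linarith [dist_triangle X z q, mem_ball'.1 hq]
  exact ⟨⟨hX, hXq⟩, mem_ball.2 (hXq.trans_le hρ)⟩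

theorem setOf_mem_ntCone_subset_ball {X z : Pt n} (hz : dist X z = infDist X Γ) :
    {q | X ∈ NTCone n Γ α q} ⊆ ball z ((2 + α) * infDist X Γ) := by
  intro q hq
  have hXq : dist X q < (1 + α) * infDist X Γ := hq.2
  rw [mem_ball, dist_comm]
  linarith [dist_triangle z X q, dist_comm z X]

namespace AhlforsRegular

theorem sigmaFinite_restrict (hAR : AhlforsRegular n d C₀ Γ) (hne : Γ.Nonempty) :
    SigmaFinite (μH[(d : ℝ)].restrict Γ) := by
  obtain ⟨q, hq⟩ := hne
  have : IsLocallyFiniteMeasure (μH[(d : ℝ)].restrict Γ) := by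
    refine ⟨fun X => ⟨ball q (dist X q + 1), isOpen_ball.mem_nhds (mem_ball.2 (lt_add_one _)), ?_⟩⟩
    rw [Measure.restrict_apply measurableSet_ball]
    exact (hAR q hq _ (by positivity)).2.trans_lt ENNReal.ofReal_lt_top
  infer_instance

theorem ofReal_infDist_pow_le_measure (hAR : AhlforsRegular n d C₀ Γ) (hΓ : IsClosed Γ)
    (hne : Γ.Nonempty) (hC₀ : 0 < C₀) (hα : 0 < α) {X : Pt n} {ρ : ℝ} (hX : X ∉ Γ)
    (hρ : (1 + α) * infDist X Γ ≤ ρ) :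
    ENNReal.ofReal (infDist X Γ ^ d) ≤
      ENNReal.ofReal (C₀ / α ^ d) * μH[(d : ℝ)].restrict Γ {q | X ∈ NTCone n Γ α q ∩ ball q ρ} := by
  have hδ : 0 < infDist X Γ := (hΓ.notMem_iff_infDist_pos hne).1 hX
  obtain ⟨z, hzΓ, hz⟩ := hΓ.exists_infDist_eq_dist hne X
  calc ENNReal.ofReal (infDist X Γ ^ d)
      = ENNReal.ofReal (C₀ / α ^ d) * ENNReal.ofReal (C₀⁻¹ * (α * infDist X Γ) ^ d) := by
        rw [← ENNReal.ofReal_mul (by positivity), mul_pow]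
        field_simp
    _ ≤ ENNReal.ofReal (C₀ / α ^ d) *
          μH[(d : ℝ)].restrict Γ {q | X ∈ NTCone n Γ α q ∩ ball q ρ} := by
        gcongr
        refine (hAR z hzΓ _ (by positivity)).1.trans ?_
        rw [Measure.restrict_apply' hΓ.measurableSet]
        exact measure_mono (inter_subset_inter_left _
          (ball_subset_setOf_mem_ntCone_inter_ball hX hz.symm hρ))

theorem measure_setOf_mem_ntCone_le (hAR : AhlforsRegular n d C₀ Γ) (hΓ : IsClosed Γ)
    (hne : Γ.Nonempty) (hα : 0 < α) {X : Pt n} (hX : X ∉ Γ) :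
    μH[(d : ℝ)].restrict Γ {q | X ∈ NTCone n Γ α q} ≤
      ENNReal.ofReal (C₀ * (2 + α) ^ d) * ENNReal.ofReal (infDist X Γ ^ d) := by
  have hδ : 0 < infDist X Γ := (hΓ.notMem_iff_infDist_pos hne).1 hX
  obtain ⟨z, hzΓ, hz⟩ := hΓ.exists_infDist_eq_dist hne X
  rw [Measure.restrict_apply' hΓ.measurableSet, ← ENNReal.ofReal_mul' (by positivity),
    mul_assoc, ← mul_pow]
  exact (measure_mono (inter_subset_inter_left _ (setOf_mem_ntCone_subset_ball hz.symm))).trans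
    (hAR z hzΓ _ (by positivity)).2

theorem lintegral_tent_le (hAR : AhlforsRegular n d C₀ Γ) (hΓ : IsClosed Γ)
    (hne : Γ.Nonempty) (hC₀ : 0 < C₀) (hα : 0 < α) {w : Pt n → ℝ≥0∞} (hw : Measurable w)
    {q₀ : Pt n} (hq₀ : q₀ ∈ Γ) (r : ℝ) :
    ∫⁻ X in ball q₀ r \ Γ, w X * ENNReal.ofReal (infDist X Γ ^ d) ≤
      ENNReal.ofReal (C₀ / α ^ d) *
        ∫⁻ q in ball q₀ ((α + 2) * r), (∫⁻ X in NTCone n Γ α q ∩ ball q ((α + 1) * r), w X)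
          ∂(μH[(d : ℝ)].restrict Γ) := by
  have := hAR.sigmaFinite_restrict hne
  rw [lintegral_setLIntegral_eq_lintegral_mul_measure
    (isOpen_setOf_mem_ntCone_inter_ball hΓ α _).measurableSet hw,
    ← lintegral_const_mul' _ _ ENNReal.ofReal_ne_top]
  refine (setLIntegral_mono' (measurableSet_ball.diff hΓ.measurableSet) fun X hX => ?_).trans
    (setLIntegral_le_lintegral _ _)
  have hδr : infDist X Γ < r := (infDist_le_dist_of_mem hq₀).trans_lt (mem_ball.1 hX.1)
  have hshadow : {q | X ∈ NTCone n Γ α q ∩ ball q ((α + 1) * r)} ⊆ ball q₀ ((α + 2) * r) :=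
    fun q hq => mem_ball.2 (by linarith [dist_triangle q X q₀, mem_ball'.1 hq.2, mem_ball.1 hX.1])
  rw [Measure.restrict_apply' measurableSet_ball, inter_eq_left.2 hshadow, mul_left_comm]
  gcongr
  refine hAR.ofReal_infDist_pow_le_measure hΓ hne hC₀ hα hX.2 ?_
  rw [add_comm α]
  exact mul_le_mul_of_nonneg_left hδr.le (by positivity)

theorem lintegral_square_function_le (hAR : AhlforsRegular n d C₀ Γ) (hΓ : IsClosed Γ)
    (hne : Γ.Nonempty) (hα : 0 < α) {w : Pt n → ℝ≥0∞} (hw : Measurable w) (q₀ : Pt n) (r : ℝ) :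
    ∫⁻ q in ball q₀ (r / 2), (∫⁻ X in NTCone n Γ α q ∩ ball q (r / 2), w X)
        ∂(μH[(d : ℝ)].restrict Γ) ≤
      ENNReal.ofReal (C₀ * (2 + α) ^ d) *
        ∫⁻ X in ball q₀ r \ Γ, w X * ENNReal.ofReal (infDist X Γ ^ d) := by
  have := hAR.sigmaFinite_restrict hne
  rw [lintegral_setLIntegral_eq_lintegral_mul_measure
    (isOpen_setOf_mem_ntCone_inter_ball hΓ α _).measurableSet hw,
    ← lintegral_const_mul' _ _ ENNReal.ofReal_ne_top,
    ← lintegral_indicator (measurableSet_ball.diff hΓ.measurableSet)]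
  refine lintegral_mono fun X => ?_
  rw [Measure.restrict_apply' measurableSet_ball]
  by_cases hX : X ∈ ball q₀ r \ Γ
  · rw [indicator_of_mem hX, mul_left_comm]
    gcongr
    exact (measure_mono fun q hq => hq.1.1).trans (hAR.measure_setOf_mem_ntCone_le hΓ hne hα hX.2)
  · have hempty : {q | X ∈ NTCone n Γ α q ∩ ball q (r / 2)} ∩ ball q₀ (r / 2) = ∅ := by
      refine eq_empty_of_forall_notMem fun q ⟨⟨hXcone, hXq⟩, hq⟩ => hX ⟨?_, hXcone.1⟩
      exact mem_ball.2 (by linarith [dist_triangle X q q₀, mem_ball.1 hXq, mem_ball.1 hq])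
    rw [hempty, measure_empty, mul_zero]
    exact zero_le

end AhlforsRegular

end

theorem carleson_square_function_equiv_general (n d : ℕ) (C₀ : ℝ)
    (hC₀ : 1 ≤ C₀) (α : ℝ) (hα : 0 < α) :
    ∃ c C : ℝ, 0 < c ∧ 0 < C ∧
      ∀ Γ : Set (Pt n), IsClosed Γ → Γ.Nonempty → AhlforsRegular n d C₀ Γ →
        ∀ h : Pt n → ℝ≥0∞, Measurable h →
          ∀ q₀ ∈ Γ, ∀ r : ℝ, 0 < r →
            ((∫⁻ X in ball q₀ r \ Γ,
                h X * ENNReal.ofReal (infDist X Γ ^ ((d : ℝ) - n + 2))) ≤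
              ENNReal.ofReal C *
                ∫⁻ q in ball q₀ ((α + 2) * r),
                  (∫⁻ X in NTCone n Γ α q ∩ ball q ((α + 1) * r),
                    h X * ENNReal.ofReal (infDist X Γ ^ ((2 : ℝ) - n)))
                  ∂(μH[(d : ℝ)].restrict Γ)) ∧
            (ENNReal.ofReal c *
                ∫⁻ q in ball q₀ (r / 2),
                  (∫⁻ X in NTCone n Γ α q ∩ ball q (r / 2),
                    h X * ENNReal.ofReal (infDist X Γ ^ ((2 : ℝ) - n)))
                  ∂(μH[(d : ℝ)].restrict Γ) ≤
              ∫⁻ X in ball q₀ r \ Γ,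
                h X * ENNReal.ofReal (infDist X Γ ^ ((d : ℝ) - n + 2))) := by
  have hC₀pos : 0 < C₀ := one_pos.trans_le hC₀
  refine ⟨(C₀ * (2 + α) ^ d)⁻¹, C₀ / α ^ d, by positivity, by positivity, ?_⟩
  intro Γ hΓ hne hAR h hh q₀ hq₀ r _
  have hw : Measurable fun X => h X * ENNReal.ofReal (infDist X Γ ^ ((2 : ℝ) - n)) :=
    hh.mul (ENNReal.measurable_ofReal.comp (measurable_infDist.pow_const _))
  have htent : ∫⁻ X in ball q₀ r \ Γ, h X * ENNReal.ofReal (infDist X Γ ^ ((d : ℝ) - n + 2)) =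
      ∫⁻ X in ball q₀ r \ Γ,
        h X * ENNReal.ofReal (infDist X Γ ^ ((2 : ℝ) - n)) * ENNReal.ofReal (infDist X Γ ^ d) :=
    setLIntegral_congr_fun (measurableSet_ball.diff hΓ.measurableSet) fun X hX => by
      rw [ofReal_rpow_natCast_sub_add_two ((hΓ.notMem_iff_infDist_pos hne).1 hX.2), mul_assoc]
  rw [htent, ENNReal.ofReal_inv_of_pos (by positivity),
    ENNReal.inv_mul_le_iff (by positivity) ENNReal.ofReal_ne_top]
  exact ⟨hAR.lintegral_tent_le hΓ hne hC₀pos hα hw hq₀ r,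
    hAR.lintegral_square_function_le hΓ hne hα hw q₀ r⟩

/-- Equivalence between the Carleson integral over a tent and the boundary integral of
the truncated square function (inequalities (2.33)–(2.35) of the paper, with
`h = |∇u|²`): for every nonnegative measurable `h`,
`∫_{T(Δ)} h δ^{d-n+2} dX ≲ ∫_{(α+2)Δ} ∫_{Γ^α(q) ∩ B(q,(α+1)r)} h δ^{2-n} dX dσ(q)` and
`∫_{T(Δ)} h δ^{d-n+2} dX ≳ ∫_{Δ/2} ∫_{Γ^α(q) ∩ B(q,r/2)} h δ^{2-n} dX dσ(q)`. -/
theorem carleson_square_function_equiv (n d : ℕ) (C₀ : ℝ)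
    (hd : 1 ≤ d) (hdn : d + 1 < n) (hC₀ : 1 ≤ C₀) (α : ℝ) (hα : 0 < α) :
    ∃ c C : ℝ, 0 < c ∧ 0 < C ∧
      ∀ Γ : Set (Pt n), IsClosed Γ → Γ.Nonempty → AhlforsRegular n d C₀ Γ →
        ∀ h : Pt n → ℝ≥0∞, Measurable h →
          ∀ q₀ ∈ Γ, ∀ r : ℝ, 0 < r →
            ((∫⁻ X in ball q₀ r \ Γ,
                h X * ENNReal.ofReal (infDist X Γ ^ ((d : ℝ) - n + 2))) ≤
              ENNReal.ofReal C *
                ∫⁻ q in ball q₀ ((α + 2) * r),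
                  (∫⁻ X in NTCone n Γ α q ∩ ball q ((α + 1) * r),
                    h X * ENNReal.ofReal (infDist X Γ ^ ((2 : ℝ) - n)))
                  ∂(μH[(d : ℝ)].restrict Γ)) ∧
            (ENNReal.ofReal c *
                ∫⁻ q in ball q₀ (r / 2),
                  (∫⁻ X in NTCone n Γ α q ∩ ball q (r / 2),
                    h X * ENNReal.ofReal (infDist X Γ ^ ((2 : ℝ) - n)))
                  ∂(μH[(d : ℝ)].restrict Γ) ≤
              ∫⁻ X in ball q₀ r \ Γ,
                h X * ENNReal.ofReal (infDist X Γ ^ ((d : ℝ) - n + 2))) :=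
  carleson_square_function_equiv_general n d C₀ hC₀ α hα
end
end
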